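/- Let r ≥ 1 and d ≥ 3, and let G be a nontrivial finite subtree of T(r,d), viewed as a combinatorial tree with boundary. Then for every j with 2 ≤ j ≤ |L(G)|, if k ∈ {2, 3, …, r+1} is such that d(d−1)^{k−3} < j ≤ d(d−1)^{k−2}, then σ_j(G) ≥ (d−2)/((d−1)^{r+2−k} − 1). -/

import Mathlib

/-
Common definitions for Steklov eigenvalues on weighted finite graphs with boundary,
following Yu-Yu, "Monotonicity of Steklov eigenvalues on graphs and applications".
-/

attribute [local instance] Classical.propDecidable

noncomputable section

/-- The boundary inner product `⟨u,v⟩_A = ∑_{x ∈ A} u x * v x * m x`. -/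
def bInner {V : Type*} [Fintype V] (A : Set V) (m : V → ℝ) (u v : V → ℝ) : ℝ :=
  ∑ x : V, if x ∈ A then u x * v x * m x else 0

/-- Total measure `m(A) = ∑_{x ∈ A} m x`. -/
def mTotal {V : Type*} [Fintype V] (A : Set V) (m : V → ℝ) : ℝ :=
  ∑ x : V, if x ∈ A then m x else 0

/-- The Dirichlet energy `⟨du,du⟩_G = ∑_{{x,y} ∈ E(G)} w x y * (u y - u x)^2`
(each edge counted once; the double sum counts each edge twice, whence the `/2`). -/
def energy {V : Type*} [Fintype V] (G : SimpleGraph V) (w : V → V → ℝ) (u : V → ℝ) : ℝ :=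
  (∑ x : V, ∑ y : V, if G.Adj x y then w x y * (u y - u x) ^ 2 else 0) / 2

/-- The weighted graph Laplacian `Δ_G f (x) = (1/m x) ∑_{y ∼ x} w x y * (f y - f x)`. -/
def lap {V : Type*} [Fintype V] (G : SimpleGraph V) (m : V → ℝ) (w : V → V → ℝ)
    (f : V → ℝ) (x : V) : ℝ :=
  (∑ y : V, if G.Adj x y then w x y * (f y - f x) else 0) / m x

/-- The `i`-th Steklov eigenvalue (1-indexed, listed with multiplicity) of the weighted
graph `(G,B,m,w)` with boundary, via the Courant min-max characterization: the infimum
over `i`-dimensional spaces of functions (injecting into `ℝ^B` by restriction) of the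
maximal Rayleigh quotient `⟨du,du⟩_G / ⟨u,u⟩_B`. -/
def steklov {V : Type*} [Fintype V] (G : SimpleGraph V) (B : Set V) (m : V → ℝ)
    (w : V → V → ℝ) (i : ℕ) : ℝ :=
  sInf {σ : ℝ | ∃ E : Submodule ℝ (V → ℝ), Module.finrank ℝ E = i ∧
    (∀ u ∈ E, (∀ x ∈ B, u x = 0) → u = 0) ∧
    ∀ u ∈ E, energy G w u ≤ σ * bInner B m u u}

/-- `f` is a Steklov eigenfunction of `(G,B,m,w)` for the eigenvalue `σ`:
`f ≠ 0`, `Δ_G f = 0` on the interior, and `∂f/∂n = σ f` on `B`. -/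
def IsSteklovEigenfun {V : Type*} [Fintype V] (G : SimpleGraph V) (B : Set V) (m : V → ℝ)
    (w : V → V → ℝ) (σ : ℝ) (f : V → ℝ) : Prop :=
  f ≠ 0 ∧ (∀ x, x ∉ B → lap G m w f x = 0) ∧ ∀ x ∈ B, -lap G m w f x = σ * f x

/-- `f` is a Steklov eigenfunction with vanishing Dirichlet boundary data on `Z`,
for the eigenvalue `lam`. -/
def IsDirSteklovEigenfun {V : Type*} [Fintype V] (G : SimpleGraph V) (B Z : Set V)
    (m : V → ℝ) (w : V → V → ℝ) (lam : ℝ) (f : V → ℝ) : Prop :=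
  f ≠ 0 ∧ (∀ x ∈ Z, f x = 0) ∧ (∀ x, x ∉ B → x ∉ Z → lap G m w f x = 0) ∧
    ∀ x ∈ B, -lap G m w f x = lam * f x

/-- The first Steklov eigenvalue with vanishing Dirichlet boundary data on `Z`:
`λ₁(G,B,Z) = inf { ⟨du,du⟩_G / ⟨u,u⟩_B : u|_B ≢ 0, u|_Z ≡ 0 }`. -/
def lambda1 {V : Type*} [Fintype V] (G : SimpleGraph V) (B Z : Set V) (m : V → ℝ)
    (w : V → V → ℝ) : ℝ :=
  sInf {c : ℝ | ∃ u : V → ℝ, (∀ x ∈ Z, u x = 0) ∧ (∃ x ∈ B, u x ≠ 0) ∧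
    c = energy G w u / bInner B m u u}

/-- The statement `λ₁(G,B,Z) ≥ c` (with the convention `λ₁ = +∞` when `B = ∅`):
every `u` vanishing on `Z` satisfies `c * ⟨u,u⟩_B ≤ ⟨du,du⟩_G`. -/
def lambda1Ge {V : Type*} [Fintype V] (G : SimpleGraph V) (B Z : Set V) (m : V → ℝ)
    (w : V → V → ℝ) (c : ℝ) : Prop :=
  ∀ u : V → ℝ, (∀ x ∈ Z, u x = 0) → c * bInner B m u u ≤ energy G w u

/-- The intrinsic boundary of a combinatorial graph: vertices of degree at most one. -/
def combBoundary {V : Type*} (G : SimpleGraph V) : Set V :=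
  {v | (G.neighborSet v).ncard ≤ 1}

/-- The tooth `G̃_x`: vertices of `G̃` reachable from `x` after deleting all edges
of the subgraph `H`. -/
def tooth {V : Type*} (Gt : SimpleGraph V) (H : Gt.Subgraph) (x : V) : Set V :=
  {y | (Gt.deleteEdges H.edgeSet).Reachable x y}

/-- The tooth `G̃_x` as a graph in its own right. -/
def toothGraph {V : Type*} (Gt : SimpleGraph V) (H : Gt.Subgraph) (x : V) :
    SimpleGraph (tooth Gt H x) :=
  (Gt.deleteEdges H.edgeSet).induce (tooth Gt H x)

/-- `G̃` is a comb over its subgraph `H`: after deleting the edges of `H`, the graph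
breaks into exactly `|V(H)|` connected components, one for each vertex of `H`. -/
def IsComb {V : Type*} (Gt : SimpleGraph V) (H : Gt.Subgraph) : Prop :=
  Function.Bijective fun x : H.verts =>
    (Gt.deleteEdges H.edgeSet).connectedComponentMk (x : V)

/-- The `i`-th Steklov eigenvalue of the subgraph `H` of `(G̃,m,w)` with boundary `B`,
with the restricted vertex measure and edge weight. -/
def steklovSub {V : Type*} [Fintype V] (Gt : SimpleGraph V) (H : Gt.Subgraph) (B : Set V)
    (m : V → ℝ) (w : V → V → ℝ) (i : ℕ) : ℝ :=
  steklov H.coe (Subtype.val ⁻¹' B) (fun x => m x.1) (fun x y => w x.1 y.1) i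

/-- The set `Z` of interior vertices of the subgraph `(H,B)` at which every function
that is harmonic in the interior and satisfies `⟨f,1⟩_B = 0` vanishes. -/
def Zset {V : Type*} [Fintype V] (Gt : SimpleGraph V) (H : Gt.Subgraph) (B : Set V)
    (m : V → ℝ) (w : V → V → ℝ) : Set H.verts :=
  {x | (x : V) ∉ B ∧ ∀ f : H.verts → ℝ,
    (∀ y : H.verts, (y : V) ∉ B → lap H.coe (fun a => m a.1) (fun a b => w a.1 b.1) f y = 0) →
    bInner (Subtype.val ⁻¹' B) (fun a => m a.1) f (fun _ => 1) = 0 → f x = 0}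

/-- The set `Z₁` of vertices of the subgraph `(H,B)` at which every Steklov
eigenfunction for `σ₂` vanishes. -/
def Z1set {V : Type*} [Fintype V] (Gt : SimpleGraph V) (H : Gt.Subgraph) (B : Set V)
    (m : V → ℝ) (w : V → V → ℝ) : Set H.verts :=
  {x | ∀ f : H.verts → ℝ,
    IsSteklovEigenfun H.coe (Subtype.val ⁻¹' B) (fun a => m a.1) (fun a b => w a.1 b.1)
      (steklovSub Gt H B m w 2) f → f x = 0}

/-- Vertex type of the wedge sum `∨_z^r Γ` of `r` copies of `Γ` at `z`:
`r` copies of `V ∖ {z}` together with one common copy of `z` (the `Sum.inr` vertex). -/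
abbrev wedgeV (V : Type*) (z : V) (r : ℕ) : Type _ := ({x : V // x ≠ z} × Fin r) ⊕ Unit

/-- The wedge sum `∨_z^r Γ` of `r` copies of the graph `Γ` at the vertex `z`. -/
def wedgeGraph {V : Type*} (Γ : SimpleGraph V) (z : V) (r : ℕ) :
    SimpleGraph (wedgeV V z r) :=
  SimpleGraph.fromRel fun a b =>
    match a, b with
    | Sum.inl (x, i), Sum.inl (y, j) => i = j ∧ Γ.Adj x.1 y.1
    | Sum.inr _, Sum.inl (y, _) => Γ.Adj z y.1
    | _, _ => False

/-- The vertex measure on `∨_z^r Γ` inherited from `m`. -/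
def wedgeM {V : Type*} (m : V → ℝ) (z : V) (r : ℕ) : wedgeV V z r → ℝ :=
  fun a => match a with
  | Sum.inl (x, _) => m x.1
  | Sum.inr _ => m z

/-- The edge weight on `∨_z^r Γ` inherited from `w`. -/
def wedgeW {V : Type*} (w : V → V → ℝ) (z : V) (r : ℕ) :
    wedgeV V z r → wedgeV V z r → ℝ :=
  fun a b => match a, b with
  | Sum.inl (x, _), Sum.inl (y, _) => w x.1 y.1
  | Sum.inl (x, _), Sum.inr _ => w x.1 z
  | Sum.inr _, Sum.inl (y, _) => w z y.1
  | Sum.inr _, Sum.inr _ => 0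

/-- The boundary `⊔^r B` of the wedge sum `∨_z^r Γ` (for `B` not containing `z`). -/
def wedgeB {V : Type*} (B : Set V) (z : V) (r : ℕ) : Set (wedgeV V z r) :=
  {a | match a with
      | Sum.inl (x, _) => x.1 ∈ B
      | Sum.inr _ => False}

/-- Vertex type of the star `St(l₀,…,l_{r-1})`: the vertex `Sum.inl ⟨j,k⟩` is the vertex
on the `j`-th arm at distance `k+1` from the center, and `Sum.inr ()` is the center. -/
abbrev starV {r : ℕ} (l : Fin r → ℕ) : Type := (Σ j : Fin r, Fin (l j)) ⊕ Unit

/-- The star `St(l₀,…,l_{r-1})`: `r` paths of lengths `l₀,…,l_{r-1}` identified at one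
end vertex (the center `Sum.inr ()`). -/
def starGraph {r : ℕ} (l : Fin r → ℕ) : SimpleGraph (starV l) :=
  SimpleGraph.fromRel fun a b =>
    match a, b with
    | Sum.inl ⟨j, k⟩, Sum.inl ⟨j', k'⟩ => j = j' ∧ k.1 + 1 = k'.1
    | Sum.inr _, Sum.inl ⟨_, k⟩ => k.1 = 0
    | _, _ => False

/-- The vertex on the `j`-th arm of the star at distance `d` from the center
(the center itself when `d = 0`). -/
def starVertexAt {r : ℕ} (l : Fin r → ℕ) (j : Fin r) (d : ℕ) : starV l :=
  if h : 0 < d ∧ d - 1 < l j then Sum.inl ⟨j, ⟨d - 1, h.2⟩⟩ else Sum.inr ()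

/-- The regular comb `Comb(r;l)`: a base path `(0,0) ∼ (1,0) ∼ ⋯ ∼ (r,0)` of length `r`,
with a tooth `(k,0) ∼ (k,1) ∼ ⋯ ∼ (k,l)` of length `l` attached at each base vertex. -/
def combGraph (r l : ℕ) : SimpleGraph (Fin (r + 1) × Fin (l + 1)) :=
  SimpleGraph.fromRel fun a b =>
    (a.2.1 = 0 ∧ b.2.1 = 0 ∧ a.1.1 + 1 = b.1.1) ∨ (a.1 = b.1 ∧ a.2.1 + 1 = b.2.1)

end
namespace SteklovAux

open SimpleGraph Finset

variable {V : Type*} {G : SimpleGraph V}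

/-- In a tree, every path between two vertices has length `dist`. -/
lemma path_length_eq_dist (ht : G.IsTree) {a b : V} (p : G.Walk a b) (hp : p.IsPath) :
    p.length = G.dist a b := by
  obtain ⟨q, hq⟩ := ht.isConnected.exists_walk_length_eq_dist a b
  have h1 : p = q.bypass := (ht.existsUnique_path a b).unique hp q.bypass_isPath
  have h1' : p.length = q.bypass.length := by rw [h1]
  have h2 : q.bypass.length ≤ q.length := q.length_bypass_le
  have h3 : G.dist a b ≤ p.length := SimpleGraph.dist_le p
  omega

lemma exists_geodesic (ht : G.IsTree) (a b : V) :
    ∃ p : G.Walk a b, p.IsPath ∧ p.length = G.dist a b :=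
  ⟨((ht.isConnected a b).some).bypass, Walk.bypass_isPath _,
    path_length_eq_dist ht _ (Walk.bypass_isPath _)⟩

lemma exists_walk_to_getVert (p : G.Walk a b) (i : ℕ) :
    ∃ q : G.Walk a (p.getVert i), q.length ≤ i := by
  induction p generalizing i with
  | nil => exact ⟨Walk.nil.copy rfl rfl, by simp [Walk.getVert]⟩
  | cons h q ih =>
    cases i with
    | zero => exact ⟨Walk.nil.copy rfl (by simp [Walk.getVert_zero]), by simp⟩
    | succ n =>
      obtain ⟨w, hw⟩ := ih n
      exact ⟨(w.cons h).copy rfl (by rw [Walk.getVert_cons_succ]), by simpa using hw⟩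

lemma exists_walk_from_getVert (p : G.Walk a b) (i : ℕ) :
    ∃ q : G.Walk (p.getVert i) b, q.length ≤ p.length - i := by
  induction p generalizing i with
  | nil => exact ⟨Walk.nil.copy (by simp [Walk.getVert]) rfl, by simp⟩
  | cons h q ih =>
    cases i with
    | zero =>
      exact ⟨(q.cons h).copy (by rw [Walk.getVert_zero]) rfl, by simp⟩
    | succ n =>
      obtain ⟨w, hw⟩ := ih n
      refine ⟨w.copy (by rw [Walk.getVert_cons_succ]) rfl, ?_⟩
      simp only [Walk.length_copy, Walk.length_cons]
      omega

lemma dist_getVert_le (p : G.Walk a b) (i : ℕ) : G.dist a (p.getVert i) ≤ i := by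
  obtain ⟨q, hq⟩ := exists_walk_to_getVert p i
  exact le_trans (SimpleGraph.dist_le q) hq

lemma dist_getVert_le' (p : G.Walk a b) (i : ℕ) :
    G.dist (p.getVert i) b ≤ p.length - i := by
  obtain ⟨q, hq⟩ := exists_walk_from_getVert p i
  exact le_trans (SimpleGraph.dist_le q) hq

lemma geodesic_getVert (hc : G.Connected) {a b : V} (p : G.Walk a b)
    (hlen : p.length = G.dist a b) {i : ℕ} (hi : i ≤ p.length) :
    G.dist a (p.getVert i) = i ∧ G.dist (p.getVert i) b = p.length - i := by
  have h1 := dist_getVert_le p i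
  have h2 := dist_getVert_le' p i
  have h3 : G.dist a b ≤ G.dist a (p.getVert i) + G.dist (p.getVert i) b :=
    hc.dist_triangle
  omega

lemma support_dist_le (p : G.Walk a b) {y : V} (hy : y ∈ p.support) :
    G.dist a y + G.dist y b ≤ p.length := by
  have hs := p.take_spec hy
  calc G.dist a y + G.dist y b ≤ (p.takeUntil y hy).length + (p.dropUntil y hy).length :=
        add_le_add (SimpleGraph.dist_le _) (SimpleGraph.dist_le _)
    _ = p.length := by rw [← Walk.length_append, hs]

/-- In a tree, adjacent vertices have depths differing by exactly one. -/
lemma adj_level (ht : G.IsTree) (o : V) {x y : V} (h : G.Adj x y) :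
    G.dist o y = G.dist o x + 1 ∨ G.dist o x = G.dist o y + 1 := by
  obtain ⟨p, hp, hlen⟩ := exists_geodesic ht o x
  by_cases hy : y ∈ p.support
  · right
    have h1 := support_dist_le p hy
    have h2 : G.dist o x ≤ G.dist o y + G.dist y x := ht.isConnected.dist_triangle
    have h3 : G.dist y x = 1 := by rw [SimpleGraph.dist_eq_one_iff_adj]; exact h.symm
    omega
  · left
    have hcp : (p.concat h).IsPath := by
      rw [← Walk.isPath_reverse_iff, Walk.reverse_concat]
      rw [Walk.cons_isPath_iff]
      refine ⟨Walk.isPath_reverse_iff _ |>.2 hp, ?_⟩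
      simpa [Walk.support_reverse] using hy
    have := path_length_eq_dist ht _ hcp
    rw [Walk.length_concat, hlen] at this
    omega


variable (G) in
/-- The parent of a vertex (relative to root `o`); junk value `v` itself if none. -/
noncomputable def par (o v : V) : V :=
  if h : ∃ p, G.Adj v p ∧ G.dist o p + 1 = G.dist o v then h.choose else v

lemma par_spec (ht : G.IsTree) {o v : V} (hv : G.dist o v ≠ 0) :
    G.Adj v (par G o v) ∧ G.dist o (par G o v) + 1 = G.dist o v := by
  have hex : ∃ p, G.Adj v p ∧ G.dist o p + 1 = G.dist o v := by
    obtain ⟨p, hp, hlen⟩ := exists_geodesic ht o v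
    have hl : 0 < p.length := by omega
    refine ⟨p.getVert (p.length - 1), ?_, ?_⟩
    · have := p.adj_getVert_succ (i := p.length - 1) (by omega)
      rw [show p.length - 1 + 1 = p.length by omega, p.getVert_length] at this
      exact this.symm
    · have := (geodesic_getVert ht.isConnected p hlen (i := p.length - 1) (by omega)).1
      omega
  rw [par, dif_pos hex]
  exact hex.choose_spec

lemma par_unique (ht : G.IsTree) {o v w : V} (h : G.Adj v w)
    (hw : G.dist o w + 1 = G.dist o v) : w = par G o v := by
  have hv : G.dist o v ≠ 0 := by omega
  obtain ⟨ha, hd⟩ := par_spec ht hv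
  set w' := par G o v
  by_contra hne
  -- two distinct neighbors of v at depth `dist o v - 1`
  have key : ∀ x : V, G.Adj v x → G.dist o x + 1 = G.dist o v → ∀ y : V, G.Adj v y →
      G.dist o y + 1 = G.dist o v → x = y := by
    intro x hx hdx y hy hdy
    obtain ⟨px, hpx, hlx⟩ := exists_geodesic ht o x
    obtain ⟨py, hpy, hly⟩ := exists_geodesic ht o y
    have hvx : v ∉ px.support := by
      intro hmem
      have := support_dist_le px hmem
      have h1 : G.dist v x = 1 := by rw [SimpleGraph.dist_eq_one_iff_adj]; exact hx
      omega
    have hvy : v ∉ py.support := by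
      intro hmem
      have := support_dist_le py hmem
      have h1 : G.dist v y = 1 := by rw [SimpleGraph.dist_eq_one_iff_adj]; exact hy
      omega
    have hcx : (px.concat hx.symm).IsPath := by
      rw [← Walk.isPath_reverse_iff, Walk.reverse_concat, Walk.cons_isPath_iff]
      exact ⟨Walk.isPath_reverse_iff _ |>.2 hpx, by simpa [Walk.support_reverse] using hvx⟩
    have hcy : (py.concat hy.symm).IsPath := by
      rw [← Walk.isPath_reverse_iff, Walk.reverse_concat, Walk.cons_isPath_iff]
      exact ⟨Walk.isPath_reverse_iff _ |>.2 hpy, by simpa [Walk.support_reverse] using hvy⟩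
    have heq : px.concat hx.symm = py.concat hy.symm :=
      (ht.existsUnique_path o v).unique hcx hcy
    have hx1 : (px.concat hx.symm).reverse.getVert 1 = x := by
      rw [Walk.reverse_concat]
      rw [show (1 : ℕ) = 0 + 1 by rfl, Walk.getVert_cons_succ, Walk.getVert_zero]
    have hy1 : (py.concat hy.symm).reverse.getVert 1 = y := by
      rw [Walk.reverse_concat]
      rw [show (1 : ℕ) = 0 + 1 by rfl, Walk.getVert_cons_succ, Walk.getVert_zero]
    rw [← hx1, ← hy1, heq]
  exact hne (key w h hw w' ha hd)

variable (G) in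
/-- `descnd G o y x` : `x` lies in the subtree below `y` (w.r.t. root `o`). -/
def descnd (o y x : V) : Prop := G.dist o y + G.dist y x = G.dist o x

lemma descnd_refl (o y : V) : descnd G o y y := by simp [descnd, SimpleGraph.dist_self]

lemma descnd_trans (hc : G.Connected) {o a b c : V} (h1 : descnd G o a b)
    (h2 : descnd G o b c) : descnd G o a c := by
  have t1 : G.dist a c ≤ G.dist a b + G.dist b c := hc.dist_triangle
  have t2 : G.dist o c ≤ G.dist o a + G.dist a c := hc.dist_triangle
  unfold descnd at *
  omega

lemma descnd_par (ht : G.IsTree) {o v : V} (hv : G.dist o v ≠ 0) :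
    descnd G o (par G o v) v := by
  obtain ⟨ha, hd⟩ := par_spec ht hv
  have : G.dist (par G o v) v = 1 := by
    rw [SimpleGraph.dist_eq_one_iff_adj]; exact ha.symm
  unfold descnd
  omega

/-- key step: the parent of a strict descendant is still a descendant. -/
lemma descnd_par_of_ne (ht : G.IsTree) {o y x : V} (hd : descnd G o y x) (hne : x ≠ y) :
    descnd G o y (par G o x) ∧ G.dist y (par G o x) + 1 = G.dist y x ∧
      G.dist o (par G o x) + 1 = G.dist o x := by
  have hc := ht.isConnected
  have hxy : G.dist y x ≠ 0 := by
    intro h0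
    exact hne ((hc y x).dist_eq_zero_iff.mp h0).symm
  obtain ⟨p, hp, hlen⟩ := exists_geodesic ht y x
  have hl : 0 < p.length := by omega
  set w := p.getVert (p.length - 1) with hwdef
  have hadj : G.Adj w x := by
    have := p.adj_getVert_succ (i := p.length - 1) (by omega)
    rwa [show p.length - 1 + 1 = p.length by omega, p.getVert_length] at this
  have hgv := geodesic_getVert hc p hlen (i := p.length - 1) (by omega)
  have hdyw : G.dist y w = p.length - 1 := hgv.1
  have how : G.dist o w + 1 = G.dist o x := by
    have htri1 : G.dist o w ≤ G.dist o y + G.dist y w := hc.dist_triangle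
    have htri2 : G.dist o x ≤ G.dist o w + G.dist w x := hc.dist_triangle
    have hwx : G.dist w x = 1 := by rw [SimpleGraph.dist_eq_one_iff_adj]; exact hadj
    have hlev := adj_level ht o hadj
    unfold descnd at hd
    omega
  have hwpar : w = par G o x := par_unique ht hadj.symm how
  refine ⟨?_, ?_, by rw [← hwpar]; exact how⟩
  · rw [← hwpar]
    unfold descnd at hd ⊢
    omega
  · rw [← hwpar]; omega

variable (G) in
/-- The ancestor of `x` at depth `q` (junk if `q > dist o x`). -/
noncomputable def anc (o : V) (x : V) (q : ℕ) : V := (par G o)^[G.dist o x - q] x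

lemma anc_self (o x : V) : anc G o x (G.dist o x) = x := by
  simp [anc]

lemma anc_iterate (ht : G.IsTree) (o x : V) :
    ∀ i, i ≤ G.dist o x →
      descnd G o ((par G o)^[i] x) x ∧ G.dist o ((par G o)^[i] x) = G.dist o x - i := by
  intro i
  induction i with
  | zero => intro _; simpa using descnd_refl o x
  | succ n ih =>
    intro hn
    obtain ⟨hdesc, hdist⟩ := ih (by omega)
    set y := (par G o)^[n] x with hy
    have hy0 : G.dist o y ≠ 0 := by omega
    have h1 : descnd G o (par G o y) y := descnd_par ht hy0
    have h2 := (par_spec ht hy0).2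
    rw [Function.iterate_succ_apply', ← hy]
    exact ⟨descnd_trans ht.isConnected h1 hdesc, by omega⟩

lemma anc_spec (ht : G.IsTree) {o x : V} {q : ℕ} (hq : q ≤ G.dist o x) :
    descnd G o (anc G o x q) x ∧ G.dist o (anc G o x q) = q := by
  have := anc_iterate ht o x (G.dist o x - q) (by omega)
  rw [anc]
  exact ⟨this.1, by omega⟩

lemma anc_unique (ht : G.IsTree) {o y x : V} (hd : descnd G o y x) :
    y = anc G o x (G.dist o y) := by
  have hc := ht.isConnected
  obtain ⟨n, hn⟩ : ∃ n, G.dist y x = n := ⟨_, rfl⟩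
  induction n generalizing x with
  | zero =>
    have hyx : y = x := (hc y x).dist_eq_zero_iff.mp hn
    subst hyx
    exact (anc_self o y).symm
  | succ n ih =>
    have hne : x ≠ y := by
      intro h; subst h
      rw [SimpleGraph.dist_self] at hn; omega
    obtain ⟨hd', hdy, hdo⟩ := descnd_par_of_ne ht hd hne
    have hrec := ih hd' (by omega)
    have hexp : G.dist o (par G o x) - G.dist o y + 1 = G.dist o x - G.dist o y := by
      unfold descnd at hd; omega
    calc y = anc G o (par G o x) (G.dist o y) := hrec
      _ = (par G o)^[G.dist o (par G o x) - G.dist o y] (par G o x) := rfl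
      _ = (par G o)^[G.dist o (par G o x) - G.dist o y + 1] x :=
          (Function.iterate_succ_apply (par G o) _ x).symm
      _ = (par G o)^[G.dist o x - G.dist o y] x := by rw [hexp]
      _ = anc G o x (G.dist o y) := rfl

lemma par_anc (ht : G.IsTree) {o x : V} {q : ℕ} (hq : q + 1 ≤ G.dist o x) :
    par G o (anc G o x (q + 1)) = anc G o x q := by
  rw [anc, anc, show G.dist o x - q = (G.dist o x - (q + 1)) + 1 from by omega,
    Function.iterate_succ_apply']

lemma anc_anc (ht : G.IsTree) {o x : V} {q q' : ℕ} (h1 : q ≤ q') (h2 : q' ≤ G.dist o x) :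
    anc G o (anc G o x q') q = anc G o x q := by
  have hd := (anc_spec ht h2).2
  simp only [anc] at hd ⊢
  rw [← Function.iterate_add_apply, hd]
  congr 1
  omega

lemma descnd_anc_anc (ht : G.IsTree) {o x : V} {q q' : ℕ} (h1 : q ≤ q') (h2 : q' ≤ G.dist o x) :
    descnd G o (anc G o x q) (anc G o x q') := by
  have hd := (anc_spec ht h2).2
  rw [← anc_anc ht h1 h2]
  exact (anc_spec ht (by omega)).1

lemma getVert_map {V' : Type*} {G' : SimpleGraph V'} (f : G →g G') {a b : V}
    (p : G.Walk a b) (i : ℕ) : (p.map f).getVert i = f (p.getVert i) := by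
  induction p generalizing i with
  | nil => simp [Walk.getVert]
  | cons h q ih =>
    cases i with
    | zero => simp
    | succ n => simpa [Walk.getVert_cons_succ] using ih n

lemma getVert_mem_support {a b : V} (p : G.Walk a b) {i : ℕ} (hi : i ≤ p.length) :
    p.getVert i ∈ p.support :=
  Walk.mem_support_iff_exists_getVert.mpr ⟨i, rfl, hi⟩

section Subtree

variable {Gt : SimpleGraph V} {H : Gt.Subgraph} {o z : V} {p0 : ℕ}

/-- Main structural lemma: from the minimum-depth vertex `z` of `H`, depths strictly
increase along paths of `H`; consequences. -/
lemma min_ascend (htree : Gt.IsTree) (hsub : H.coe.IsTree)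
    (hz : z ∈ H.verts) (hzd : Gt.dist o z = p0)
    (hmin : ∀ y ∈ H.verts, p0 ≤ Gt.dist o y) :
    ∀ y (hy : y ∈ H.verts), Gt.dist o y = p0 + Gt.dist z y ∧
      (y ≠ z → par Gt o y ∈ H.verts ∧ H.Adj (par Gt o y) y) := by
  have hc := htree.isConnected
  intro y hy
  obtain ⟨q, hqp, _⟩ := exists_geodesic hsub ⟨z, hz⟩ ⟨y, hy⟩
  set m : Gt.Walk z y := q.map (SimpleGraph.Subgraph.hom H) with hm
  have hmp : m.IsPath := Walk.map_isPath_of_injective SimpleGraph.Subgraph.hom_injective hqp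
  have hmlen : m.length = Gt.dist z y := path_length_eq_dist htree m hmp
  have hmem : ∀ i, i ≤ m.length → m.getVert i ∈ H.verts := by
    intro i hi
    have hs := getVert_mem_support m hi
    replace hs : m.getVert i ∈ q.support.map H.hom := by rw [← Walk.support_map]; exact hs
    obtain ⟨x, _, hx2⟩ := List.mem_map.mp hs
    rw [← hx2]
    simp only [SimpleGraph.Subgraph.coe_hom]
    exact x.2
  have hHadj : ∀ i, i < m.length → H.Adj (m.getVert i) (m.getVert (i + 1)) := by
    intro i hi
    have := q.adj_getVert_succ (i := i) (by rw [← Walk.length_map H.hom q]; exact hi)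
    rw [SimpleGraph.Subgraph.coe_adj] at this
    have e1 : (q.getVert i : V) = m.getVert i := by
      exact (getVert_map H.hom q i).symm
    have e2 : (q.getVert (i + 1) : V) = m.getVert (i + 1) := by
      exact (getVert_map H.hom q (i + 1)).symm
    rwa [e1, e2] at this
  have claim : ∀ i, i ≤ m.length → Gt.dist o (m.getVert i) = p0 + i := by
    intro i
    induction i using Nat.strong_induction_on with
    | _ i ih =>
      match i with
      | 0 => intro _; rw [Walk.getVert_zero]; simpa using hzd
      | (n + 1) =>
        intro hi
        have hPn := ih n (by omega) (by omega)
        have hadj : Gt.Adj (m.getVert n) (m.getVert (n + 1)) :=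
          (hHadj n (by omega)).adj_sub
        have hge : p0 ≤ Gt.dist o (m.getVert (n + 1)) := hmin _ (hmem _ hi)
        rcases adj_level htree o hadj with hup | hdown
        · omega
        · exfalso
          have hn1 : 1 ≤ n := by omega
          have hPn1 := ih (n - 1) (by omega) (by omega)
          have hd0 : Gt.dist o (m.getVert n) ≠ 0 := by omega
          have e1 : m.getVert (n + 1) = par Gt o (m.getVert n) :=
            par_unique htree hadj (by omega)
          have hadj' : Gt.Adj (m.getVert n) (m.getVert (n - 1)) := by
            have := (hHadj (n - 1) (by omega)).adj_sub
            rw [show n - 1 + 1 = n by omega] at this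
            exact this.symm
          have e2 : m.getVert (n - 1) = par Gt o (m.getVert n) :=
            par_unique htree hadj' (by omega)
          have g1 := (geodesic_getVert hc m hmlen (i := n + 1) hi).1
          have g2 := (geodesic_getVert hc m hmlen (i := n - 1) (by omega)).1
          rw [e1] at g1
          rw [e2] at g2
          omega
  constructor
  · have := claim m.length le_rfl
    rwa [Walk.getVert_length, hmlen] at this
  · intro hne
    have hlpos : 0 < m.length := by
      rcases Nat.eq_zero_or_pos m.length with h0 | h
      · exact absurd (Walk.eq_of_length_eq_zero h0).symm hne
      · exact h
    have hadj : Gt.Adj (m.getVert (m.length - 1)) y := by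
      have := (hHadj (m.length - 1) (by omega)).adj_sub
      rwa [show m.length - 1 + 1 = m.length by omega, Walk.getVert_length] at this
    have hdy : Gt.dist o y = p0 + m.length := by
      have := claim m.length le_rfl
      rwa [Walk.getVert_length] at this
    have hpar : m.getVert (m.length - 1) = par Gt o y := by
      apply par_unique htree hadj.symm
      have := claim (m.length - 1) (by omega)
      omega
    have hHlast := hHadj (m.length - 1) (by omega)
    rw [show m.length - 1 + 1 = m.length by omega, Walk.getVert_length] at hHlast
    rw [← hpar]
    exact ⟨hmem _ (by omega), hHlast⟩

lemma min_unique (htree : Gt.IsTree) (hsub : H.coe.IsTree)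
    (hz : z ∈ H.verts) (hzd : Gt.dist o z = p0)
    (hmin : ∀ y ∈ H.verts, p0 ≤ Gt.dist o y) :
    ∀ y ∈ H.verts, Gt.dist o y = p0 → y = z := by
  intro y hy h0
  have := (min_ascend htree hsub hz hzd hmin y hy).1
  have hzy : Gt.dist z y = 0 := by omega
  exact ((htree.isConnected z y).dist_eq_zero_iff.mp hzy).symm

lemma anc_mem_H (htree : Gt.IsTree) (hsub : H.coe.IsTree)
    (hz : z ∈ H.verts) (hzd : Gt.dist o z = p0)
    (hmin : ∀ y ∈ H.verts, p0 ≤ Gt.dist o y)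
    {y : V} (hy : y ∈ H.verts) {q : ℕ} (hq0 : p0 ≤ q) (hq1 : q ≤ Gt.dist o y) :
    anc Gt o y q ∈ H.verts := by
  have key : ∀ i, i ≤ Gt.dist o y - p0 → (par Gt o)^[i] y ∈ H.verts := by
    intro i
    induction i with
    | zero => simpa using hy
    | succ n ih =>
      intro hn
      have hw : (par Gt o)^[n] y ∈ H.verts := ih (by omega)
      have hwd : Gt.dist o ((par Gt o)^[n] y) = Gt.dist o y - n :=
        (anc_iterate htree o y n (by omega)).2
      have hne : (par Gt o)^[n] y ≠ z := by
        intro he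
        rw [he, hzd] at hwd
        omega
      rw [Function.iterate_succ_apply']
      exact ((min_ascend htree hsub hz hzd hmin _ hw).2 hne).1
  exact key (Gt.dist o y - q) (by omega)

lemma anc_adj_H (htree : Gt.IsTree) (hsub : H.coe.IsTree)
    (hz : z ∈ H.verts) (hzd : Gt.dist o z = p0)
    (hmin : ∀ y ∈ H.verts, p0 ≤ Gt.dist o y)
    {y : V} (hy : y ∈ H.verts) {q : ℕ} (hq0 : p0 ≤ q) (hq1 : q + 1 ≤ Gt.dist o y) :
    H.Adj (anc Gt o y q) (anc Gt o y (q + 1)) := by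
  have hw : anc Gt o y (q + 1) ∈ H.verts :=
    anc_mem_H htree hsub hz hzd hmin hy (by omega) hq1
  have hwd : Gt.dist o (anc Gt o y (q + 1)) = q + 1 := (anc_spec htree hq1).2
  have hne : anc Gt o y (q + 1) ≠ z := by
    intro he; rw [he, hzd] at hwd; omega
  have := ((min_ascend htree hsub hz hzd hmin _ hw).2 hne).2
  rwa [par_anc htree hq1] at this

variable [Fintype V] {r d : ℕ}

lemma child_exists (htree : Gt.IsTree)
    (hdeg : ∀ v, Gt.dist o v < r → (Gt.neighborSet v).ncard = d) (hd : 3 ≤ d)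
    {w : V} (hw : Gt.dist o w < r) :
    ∃ c, Gt.Adj w c ∧ Gt.dist o c = Gt.dist o w + 1 := by
  by_contra hno
  push_neg at hno
  have hall : ∀ c, Gt.Adj w c → Gt.dist o c + 1 = Gt.dist o w := by
    intro c hc
    rcases adj_level htree o hc with h | h
    · exact absurd h (hno c hc)
    · omega
  have hsub : Gt.neighborSet w ⊆ {par Gt o w} := by
    intro c hc
    rw [SimpleGraph.mem_neighborSet] at hc
    have h1 := hall c hc
    have hw0 : Gt.dist o w ≠ 0 := by omega
    have := par_unique htree (o := o) hc (by omega)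
    simpa using this
  have := Set.ncard_le_ncard hsub (Set.finite_singleton _)
  rw [hdeg w hw] at this
  simp [Set.ncard_singleton] at this
  omega

lemma descend_exists (htree : Gt.IsTree) (hball : ∀ v, Gt.dist o v ≤ r)
    (hdeg : ∀ v, Gt.dist o v < r → (Gt.neighborSet v).ncard = d) (hd : 3 ≤ d)
    {w : V} {q : ℕ} (h1 : Gt.dist o w ≤ q) (h2 : q ≤ r) :
    ∃ v, descnd Gt o w v ∧ Gt.dist o v = q := by
  have key : ∀ i, Gt.dist o w + i ≤ r →
      ∃ v, descnd Gt o w v ∧ Gt.dist o v = Gt.dist o w + i := by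
    intro i
    induction i with
    | zero => exact fun _ => ⟨w, descnd_refl o w, by omega⟩
    | succ n ih =>
      intro hn
      obtain ⟨v, hv1, hv2⟩ := ih (by omega)
      obtain ⟨c, hc1, hc2⟩ := child_exists htree hdeg hd (w := v) (by omega)
      have hvc : descnd Gt o v c := by
        have h1 : Gt.dist v c = 1 := by rw [SimpleGraph.dist_eq_one_iff_adj]; exact hc1
        unfold descnd
        omega
      exact ⟨c, descnd_trans htree.isConnected hv1 hvc, by omega⟩
  obtain ⟨v, hv⟩ := key (q - Gt.dist o w) (by omega)
  exact ⟨v, hv.1, by omega⟩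

lemma notH_propagate (htree : Gt.IsTree) (hsub : H.coe.IsTree)
    (hz : z ∈ H.verts) (hzd : Gt.dist o z = p0)
    (hmin : ∀ y ∈ H.verts, p0 ≤ Gt.dist o y)
    {c v : V} (hc : c ∉ H.verts) (hp0 : p0 ≤ Gt.dist o c) (hdesc : descnd Gt o c v) :
    v ∉ H.verts := by
  intro hv
  apply hc
  have := anc_unique htree hdesc
  rw [this]
  refine anc_mem_H htree hsub hz hzd hmin hv hp0 ?_
  unfold descnd at hdesc
  omega

/-- Sphere cardinality bound: `|S_m| ≤ d (d-1)^(m-1)`. -/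
lemma sphere_card (htree : Gt.IsTree)
    (hdeg : ∀ v, Gt.dist o v < r → (Gt.neighborSet v).ncard = d) (hd : 3 ≤ d)
    {m : ℕ} (h1 : 1 ≤ m) (h2 : m < r) :
    (Finset.univ.filter (fun v => Gt.dist o v = m)).card ≤ d * (d - 1) ^ (m - 1) := by
  induction m with
  | zero => omega
  | succ n ih =>
    have degFin : ∀ a : V, Gt.dist o a < r →
        ((Gt.neighborSet a).toFinset).card = d := by
      intro a ha
      rw [← Set.ncard_eq_toFinset_card']
      exact hdeg a ha
    rcases Nat.eq_zero_or_pos n with h0 | hn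
    · subst h0
      have hsub1 : (Finset.univ.filter (fun v => Gt.dist o v = 1)) ⊆
          (Gt.neighborSet o).toFinset := by
        intro v hv
        simp only [Finset.mem_filter] at hv
        rw [Set.mem_toFinset, SimpleGraph.mem_neighborSet]
        rw [← SimpleGraph.dist_eq_one_iff_adj]
        exact hv.2
      calc (Finset.univ.filter (fun v => Gt.dist o v = 1)).card
          ≤ ((Gt.neighborSet o).toFinset).card := Finset.card_le_card hsub1
        _ = d := degFin o (by simp only [SimpleGraph.dist_self]; omega)
        _ ≤ d * (d - 1) ^ 0 := by simp
    · -- n ≥ 1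
      set S1 := Finset.univ.filter (fun v => Gt.dist o v = n + 1) with hS1
      set S0 := Finset.univ.filter (fun v => Gt.dist o v = n) with hS0
      have hfib : ∀ a ∈ S1.image (par Gt o),
          (S1.filter (fun x => par Gt o x = a)).card ≤ d - 1 := by
        intro a ha
        obtain ⟨x, hx, hxa⟩ := Finset.mem_image.mp ha
        simp only [hS1, Finset.mem_filter] at hx
        have hx0 : Gt.dist o x ≠ 0 := by omega
        have hpx := par_spec htree (o := o) (v := x) hx0
        have hda : Gt.dist o a = n := by rw [← hxa]; omega
        have ha0 : Gt.dist o a ≠ 0 := by omega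
        have hpa := par_spec htree (o := o) (v := a) ha0
        have hsubs : S1.filter (fun x => par Gt o x = a) ⊆
            ((Gt.neighborSet a).toFinset).erase (par Gt o a) := by
          intro x' hx'
          simp only [Finset.mem_filter, hS1] at hx'
          obtain ⟨⟨_, hx'd⟩, hx'p⟩ := hx'
          have hx'0 : Gt.dist o x' ≠ 0 := by omega
          have hpx' := par_spec htree (o := o) (v := x') hx'0
          rw [Finset.mem_erase, Set.mem_toFinset, SimpleGraph.mem_neighborSet]
          constructor
          · intro he
            rw [← he] at hpa
            rw [hx'p] at hpx'
            omega
          · rw [← hx'p]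
            exact hpx'.1.symm
        calc (S1.filter (fun x => par Gt o x = a)).card
            ≤ (((Gt.neighborSet a).toFinset).erase (par Gt o a)).card :=
              Finset.card_le_card hsubs
          _ ≤ ((Gt.neighborSet a).toFinset).card - 1 := by
              apply le_of_eq
              apply Finset.card_erase_of_mem
              rw [Set.mem_toFinset, SimpleGraph.mem_neighborSet]
              exact hpa.1
          _ ≤ d - 1 := by rw [degFin a (by omega)]
      have himg : S1.image (par Gt o) ⊆ S0 := by
        intro a ha
        obtain ⟨x, hx, hxa⟩ := Finset.mem_image.mp ha
        simp only [hS1, Finset.mem_filter] at hx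
        have hx0 : Gt.dist o x ≠ 0 := by omega
        have hpx := par_spec htree (o := o) (v := x) hx0
        simp only [hS0, Finset.mem_filter]
        exact ⟨Finset.mem_univ _, by rw [← hxa]; omega⟩
      calc S1.card ≤ (d - 1) * (S1.image (par Gt o)).card :=
            Finset.card_le_mul_card_image S1 (d - 1) hfib
        _ ≤ (d - 1) * S0.card := by
            apply Nat.mul_le_mul_left
            exact Finset.card_le_card himg
        _ ≤ (d - 1) * (d * (d - 1) ^ (n - 1)) := by
            apply Nat.mul_le_mul_left
            exact ih hn (by omega)
        _ = d * (d - 1) ^ n := by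
            conv_rhs => rw [show n = n - 1 + 1 by omega]
            rw [pow_succ]
            ring
        _ = d * (d - 1) ^ (n + 1 - 1) := by rw [Nat.add_sub_cancel]

variable (Gt H) in
/-- A leaf of the subtree `H`, as a predicate on ambient vertices. -/
def IsLeaf (v : V) : Prop := v ∈ H.verts ∧ ({w | H.Adj v w}).ncard ≤ 1

lemma not_leaf_of_two (htree : Gt.IsTree) {v a b : V} (ha : H.Adj v a) (hb : H.Adj v b)
    (hab : a ≠ b) : ¬ IsLeaf Gt H v := by
  rintro ⟨-, hcard⟩
  have h2 : 1 < ({w | H.Adj v w}).ncard := by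
    rw [Set.one_lt_ncard_iff (Set.toFinite _)]
    exact ⟨a, b, ha, hb, hab⟩
  omega

/-- Leaf-count bound: the subtree of `H` below a vertex `y` strictly deeper than the
root `z` contains at most `(d-1)^(r - |y|)` leaves of `H`. -/
lemma leaf_count (htree : Gt.IsTree) (hsub : H.coe.IsTree)
    (hz : z ∈ H.verts) (hzd : Gt.dist o z = p0)
    (hmin : ∀ y ∈ H.verts, p0 ≤ Gt.dist o y)
    (hball : ∀ v, Gt.dist o v ≤ r)
    (hdeg : ∀ v, Gt.dist o v < r → (Gt.neighborSet v).ncard = d) (hd : 3 ≤ d) :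
    ∀ n y, y ∈ H.verts → p0 < Gt.dist o y → r - Gt.dist o y ≤ n →
      (Finset.univ.filter (fun x => IsLeaf Gt H x ∧ descnd Gt o y x)).card ≤
        (d - 1) ^ (r - Gt.dist o y) := by
  have hc := htree.isConnected
  have deep : ∀ y, Gt.dist o y = r →
      (Finset.univ.filter (fun x => IsLeaf Gt H x ∧ descnd Gt o y x)).card ≤
        (d - 1) ^ (r - Gt.dist o y) := by
    intro y hyr
    have hsub1 : Finset.univ.filter (fun x => IsLeaf Gt H x ∧ descnd Gt o y x) ⊆ {y} := by
      intro x hx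
      simp only [Finset.mem_filter] at hx
      have hdx := hx.2.2
      unfold descnd at hdx
      have hbx := hball x
      have : Gt.dist y x = 0 := by omega
      rw [Finset.mem_singleton]
      exact ((hc y x).dist_eq_zero_iff.mp this).symm
    calc (Finset.univ.filter (fun x => IsLeaf Gt H x ∧ descnd Gt o y x)).card
        ≤ ({y} : Finset V).card := Finset.card_le_card hsub1
      _ = 1 := Finset.card_singleton y
      _ ≤ (d - 1) ^ (r - Gt.dist o y) := Nat.one_le_pow _ _ (by omega)
  intro n
  induction n with
  | zero =>
    intro y hy hp hn
    have := hball y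
    exact deep y (by omega)
  | succ n ih =>
    intro y hy hp hn
    by_cases hyr : Gt.dist o y = r
    · exact deep y hyr
    have hylt : Gt.dist o y < r := lt_of_le_of_ne (hball y) hyr
    set dy := Gt.dist o y with hdy
    have hkey : ∀ x, IsLeaf Gt H x → descnd Gt o y x → x ≠ y →
        H.Adj y (anc Gt o x (dy + 1)) ∧ descnd Gt o (anc Gt o x (dy + 1)) x ∧
          Gt.dist o (anc Gt o x (dy + 1)) = dy + 1 := by
      intro x hlx hdx hne
      have hxH : x ∈ H.verts := hlx.1
      have hd1 : Gt.dist y x ≠ 0 := fun h0 => hne ((hc y x).dist_eq_zero_iff.mp h0).symm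
      have hdd : dy + Gt.dist y x = Gt.dist o x := hdx
      have hq : dy + 1 ≤ Gt.dist o x := by omega
      obtain ⟨hdesc, hdist⟩ := anc_spec htree hq
      have hyanc : y = anc Gt o x dy := anc_unique htree hdx
      have hadj := anc_adj_H htree hsub hz hzd hmin hxH (q := dy) (by omega) hq
      rw [← hyanc] at hadj
      exact ⟨hadj, hdesc, hdist⟩
    have hynez : y ≠ z := by
      intro he
      rw [he, hzd] at hdy
      omega
    obtain ⟨hpary, hparadj⟩ := (min_ascend htree hsub hz hzd hmin y hy).2 hynez
    have hpard : Gt.dist o (par Gt o y) + 1 = dy := (par_spec htree (o := o) (by omega)).2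
    by_cases hleaf : IsLeaf Gt H y
    · have hsub1 : Finset.univ.filter (fun x => IsLeaf Gt H x ∧ descnd Gt o y x) ⊆ {y} := by
        intro x hx
        simp only [Finset.mem_filter] at hx
        rw [Finset.mem_singleton]
        by_contra hne
        obtain ⟨hadj, -, hdist⟩ := hkey x hx.2.1 hx.2.2 hne
        have hne2 : par Gt o y ≠ anc Gt o x (dy + 1) := by
          intro he; rw [he] at hpard; omega
        exact not_leaf_of_two htree hparadj.symm hadj hne2 hleaf
      calc (Finset.univ.filter (fun x => IsLeaf Gt H x ∧ descnd Gt o y x)).card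
          ≤ ({y} : Finset V).card := Finset.card_le_card hsub1
        _ = 1 := Finset.card_singleton y
        _ ≤ (d - 1) ^ (r - dy) := Nat.one_le_pow _ _ (by omega)
    · set C := Finset.univ.filter (fun c => H.Adj y c ∧ Gt.dist o c = dy + 1) with hC
      have hCcard : C.card ≤ d - 1 := by
        have hCsub : C ⊆ ((Gt.neighborSet y).toFinset).erase (par Gt o y) := by
          intro c hcC
          simp only [hC, Finset.mem_filter] at hcC
          rw [Finset.mem_erase, Set.mem_toFinset, SimpleGraph.mem_neighborSet]
          refine ⟨?_, hcC.2.1.adj_sub⟩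
          intro he
          rw [← he] at hpard
          omega
        calc C.card ≤ (((Gt.neighborSet y).toFinset).erase (par Gt o y)).card :=
              Finset.card_le_card hCsub
          _ = ((Gt.neighborSet y).toFinset).card - 1 := by
              apply Finset.card_erase_of_mem
              rw [Set.mem_toFinset, SimpleGraph.mem_neighborSet]
              exact (par_spec htree (o := o) (v := y) (by omega)).1
          _ ≤ d - 1 := by
              rw [← Set.ncard_eq_toFinset_card', hdeg y hylt]
      have hsplit : Finset.univ.filter (fun x => IsLeaf Gt H x ∧ descnd Gt o y x) ⊆
          C.biUnion (fun c => Finset.univ.filter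
            (fun x => IsLeaf Gt H x ∧ descnd Gt o c x)) := by
        intro x hx
        simp only [Finset.mem_filter] at hx
        have hne : x ≠ y := by
          intro he; rw [he] at hx; exact hleaf hx.2.1
        obtain ⟨hadj, hdesc, hdist⟩ := hkey x hx.2.1 hx.2.2 hne
        rw [Finset.mem_biUnion]
        refine ⟨anc Gt o x (dy + 1), ?_, ?_⟩
        · simp only [hC, Finset.mem_filter]
          exact ⟨Finset.mem_univ _, hadj, hdist⟩
        · simp only [Finset.mem_filter]
          exact ⟨Finset.mem_univ _, hx.2.1, hdesc⟩
      calc (Finset.univ.filter (fun x => IsLeaf Gt H x ∧ descnd Gt o y x)).card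
          ≤ (C.biUnion (fun c => Finset.univ.filter
              (fun x => IsLeaf Gt H x ∧ descnd Gt o c x))).card := Finset.card_le_card hsplit
        _ ≤ ∑ c ∈ C, (Finset.univ.filter (fun x => IsLeaf Gt H x ∧ descnd Gt o c x)).card :=
            Finset.card_biUnion_le
        _ ≤ ∑ _c ∈ C, (d - 1) ^ (r - (dy + 1)) := by
            apply Finset.sum_le_sum
            intro c hcC
            simp only [hC, Finset.mem_filter] at hcC
            have hcH : c ∈ H.verts := hcC.2.1.snd_mem
            have := ih c hcH (by omega) (by omega)
            rwa [hcC.2.2] at this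
        _ = C.card * (d - 1) ^ (r - (dy + 1)) := by
            rw [Finset.sum_const, smul_eq_mul]
        _ ≤ (d - 1) * (d - 1) ^ (r - (dy + 1)) := by
            exact Nat.mul_le_mul_right _ hCcard
        _ = (d - 1) ^ (r - dy) := by
            rw [← pow_succ']
            congr 1
            omega

/-- Blocked-descendant existence: an interior leaf `x` of `H` (strictly above level `t`)
has a descendant at level `t` outside `H`, whose ancestor chain leaves `H` right away. -/
lemma blocked_exists (htree : Gt.IsTree) (hsub : H.coe.IsTree)
    (hz : z ∈ H.verts) (hzd : Gt.dist o z = p0)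
    (hmin : ∀ y ∈ H.verts, p0 ≤ Gt.dist o y)
    (hball : ∀ v, Gt.dist o v ≤ r)
    (hdeg : ∀ v, Gt.dist o v < r → (Gt.neighborSet v).ncard = d) (hd : 3 ≤ d)
    {t : ℕ} (htr : t < r) {x : V} (hx : IsLeaf Gt H x) (hxt : Gt.dist o x < t) :
    ∃ v, Gt.dist o v = t ∧ descnd Gt o x v ∧ v ∉ H.verts ∧
      anc Gt o v (Gt.dist o x + 1) ∉ H.verts := by
  have hc := htree.isConnected
  set px := Gt.dist o x with hpx
  have hxH : x ∈ H.verts := hx.1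
  have hp0x : p0 ≤ px := hmin x hxH
  -- find a child of x not H-adjacent to x
  have hch : ∃ c, Gt.Adj x c ∧ Gt.dist o c = px + 1 ∧ ¬ H.Adj x c := by
    by_contra hno
    push_neg at hno
    -- then all children are H-adjacent; but there are ≥ d - 1 ≥ 2 children
    have hsubN : Gt.neighborSet x ⊆ {w | H.Adj x w} ∪ {par Gt o x} := by
      intro w hw
      rw [SimpleGraph.mem_neighborSet] at hw
      rcases adj_level htree o hw with hup | hdown
      · exact Or.inl (hno w hw (by omega))
      · right
        have : w = par Gt o x := par_unique htree (o := o) hw (by omega)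
        simpa using this
    have h1 : (Gt.neighborSet x).ncard ≤ ({w | H.Adj x w} ∪ {par Gt o x} : Set V).ncard :=
      Set.ncard_le_ncard hsubN (Set.toFinite _)
    have h2 : ({w | H.Adj x w} ∪ {par Gt o x} : Set V).ncard ≤
        ({w | H.Adj x w} : Set V).ncard + ({par Gt o x} : Set V).ncard :=
      Set.ncard_union_le _ _
    rw [hdeg x (by omega)] at h1
    have h3 := hx.2
    rw [Set.ncard_singleton] at h2
    omega
  obtain ⟨c, hadj, hcd, hcH⟩ := hch
  have hcnotH : c ∉ H.verts := by
    intro hcHv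
    apply hcH
    have hcnez : c ≠ z := by
      intro he; rw [he, hzd] at hcd; omega
    obtain ⟨hp1, hp2⟩ := (min_ascend htree hsub hz hzd hmin c hcHv).2 hcnez
    have : x = par Gt o c := par_unique htree (o := o) hadj.symm (by omega)
    rwa [← this] at hp2
  obtain ⟨v, hv1, hv2⟩ := descend_exists htree hball hdeg hd (w := c) (q := t) (by omega) (by omega)
  have hdxc : descnd Gt o x c := by
    have : Gt.dist x c = 1 := by rw [SimpleGraph.dist_eq_one_iff_adj]; exact hadj
    unfold descnd; omega
  refine ⟨v, hv2, descnd_trans hc hdxc hv1, ?_, ?_⟩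
  · exact notH_propagate htree hsub hz hzd hmin hcnotH
      (show p0 ≤ Gt.dist o c from by omega) hv1
  · have : c = anc Gt o v (Gt.dist o c) := anc_unique htree hv1
    rw [hcd] at this
    rw [← this]
    exact hcnotH

variable (Gt H o) in
/-- A choice of blocked descendant at level `t`. -/
noncomputable def blkFun (t : ℕ) (x : V) : V :=
  if h : ∃ v, Gt.dist o v = t ∧ descnd Gt o x v ∧ v ∉ H.verts ∧
      anc Gt o v (Gt.dist o x + 1) ∉ H.verts then h.choose else x

/-- Cardinality bound for the vanishing set `Z` in the main case `p0 < t`. -/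
lemma Zcard (htree : Gt.IsTree) (hsub : H.coe.IsTree)
    (hz : z ∈ H.verts) (hzd : Gt.dist o z = p0)
    (hmin : ∀ y ∈ H.verts, p0 ≤ Gt.dist o y)
    (hball : ∀ v, Gt.dist o v ≤ r)
    (hdeg : ∀ v, Gt.dist o v < r → (Gt.neighborSet v).ncard = d) (hd : 3 ≤ d)
    {t : ℕ} (ht1 : 1 ≤ t) (htr : t < r) :
    (Finset.univ.filter (fun v => (v ∈ H.verts ∧ Gt.dist o v = t) ∨
      (IsLeaf Gt H v ∧ Gt.dist o v < t))).card ≤ d * (d - 1) ^ (t - 1) := by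
  have hc := htree.isConnected
  set f : V → V := fun v => if v ∈ H.verts ∧ Gt.dist o v = t then v else blkFun Gt H o t v
    with hf
  have hblk : ∀ x, IsLeaf Gt H x → Gt.dist o x < t →
      Gt.dist o (blkFun Gt H o t x) = t ∧ descnd Gt o x (blkFun Gt H o t x) ∧
        blkFun Gt H o t x ∉ H.verts ∧
        anc Gt o (blkFun Gt H o t x) (Gt.dist o x + 1) ∉ H.verts := by
    intro x hx hxt
    have hex := blocked_exists htree hsub hz hzd hmin hball hdeg hd htr hx hxt
    rw [blkFun, dif_pos hex]
    exact hex.choose_spec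
  -- f maps Z into the sphere of radius t
  apply le_trans (Finset.card_le_card_of_injOn f ?maps ?inj)
  · exact sphere_card htree hdeg hd ht1 htr
  case maps =>
    intro v hv
    simp only [Finset.mem_coe, Finset.mem_filter] at hv ⊢
    refine ⟨Finset.mem_univ _, ?_⟩
    rcases hv.2 with h1 | h2
    · simp only [hf]; rw [if_pos h1]; exact h1.2
    · have hne : ¬ (v ∈ H.verts ∧ Gt.dist o v = t) := by
        rintro ⟨-, hvt⟩; omega
      simp only [hf]; rw [if_neg hne]
      exact (hblk v h2.1 h2.2).1
  case inj =>
    -- key: a type-2 image is outside H, and ancestors distinguish distinct leaves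
    have key : ∀ a b : V, (IsLeaf Gt H a ∧ Gt.dist o a < t) →
        (IsLeaf Gt H b ∧ Gt.dist o b < t) → blkFun Gt H o t a = blkFun Gt H o t b →
        Gt.dist o a < Gt.dist o b → False := by
      intro a b ha hb heq hlt
      obtain ⟨ha1, ha2, ha3, ha4⟩ := hblk a ha.1 ha.2
      obtain ⟨hb1, hb2, hb3, hb4⟩ := hblk b hb.1 hb.2
      set v := blkFun Gt H o t a with hv
      rw [← heq] at hb2
      -- b = anc v (dist o b), and anc v (dist o a + 1) ∉ H.verts
      have hbanc : b = anc Gt o v (Gt.dist o b) := anc_unique htree hb2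
      have hdesc : descnd Gt o (anc Gt o v (Gt.dist o a + 1)) (anc Gt o v (Gt.dist o b)) :=
        descnd_anc_anc htree (by omega) (by omega)
      have : anc Gt o v (Gt.dist o b) ∉ H.verts := by
        apply notH_propagate htree hsub hz hzd hmin ha4 ?_ hdesc
        have := (anc_spec htree (o := o) (x := v) (q := Gt.dist o a + 1) (by omega)).2
        rw [this]
        have := hmin a ha.1.1
        omega
      rw [← hbanc] at this
      exact this hb.1.1
    intro a ha b hb heq
    simp only [Finset.coe_filter, Set.mem_setOf_eq] at ha hb
    rcases ha.2 with ha2 | ha2 <;> rcases hb.2 with hb2 | hb2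
    · simp only [hf] at heq
      rwa [if_pos ha2, if_pos hb2] at heq
    · exfalso
      simp only [hf] at heq
      rw [if_pos ha2, if_neg (show ¬(b ∈ H.verts ∧ Gt.dist o b = t) from by
        rintro ⟨-, h⟩; omega)] at heq
      have := (hblk b hb2.1 hb2.2).2.2.1
      rw [← heq] at this
      exact this ha2.1
    · exfalso
      simp only [hf] at heq
      rw [if_pos hb2, if_neg (show ¬(a ∈ H.verts ∧ Gt.dist o a = t) from by
        rintro ⟨-, h⟩; omega)] at heq
      have := (hblk a ha2.1 ha2.2).2.2.1
      rw [heq] at this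
      exact this hb2.1
    · simp only [hf] at heq
      rw [if_neg (show ¬(a ∈ H.verts ∧ Gt.dist o a = t) from by
          rintro ⟨-, h⟩; omega),
        if_neg (show ¬(b ∈ H.verts ∧ Gt.dist o b = t) from by
          rintro ⟨-, h⟩; omega)] at heq
      rcases lt_trichotomy (Gt.dist o a) (Gt.dist o b) with hlt | heqd | hgt
      · exact absurd (key a b ha2 hb2 heq hlt) not_false
      · -- same depth: a = anc v (dist o a) = b
        obtain ⟨ha1, ha2', -, -⟩ := hblk a ha2.1 ha2.2
        obtain ⟨hb1, hb2', -, -⟩ := hblk b hb2.1 hb2.2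
        rw [← heq] at hb2'
        have e1 : a = anc Gt o (blkFun Gt H o t a) (Gt.dist o a) := anc_unique htree ha2'
        have e2 : b = anc Gt o (blkFun Gt H o t a) (Gt.dist o b) := anc_unique htree hb2'
        rw [e1, e2, heqd]
      · exact absurd (key b a hb2 ha2 heq.symm hgt) not_false

/-- In the case `t = p0`, the vanishing set is just `{z}`. -/
lemma Zcard_min (htree : Gt.IsTree) (hsub : H.coe.IsTree)
    (hz : z ∈ H.verts) (hzd : Gt.dist o z = p0)
    (hmin : ∀ y ∈ H.verts, p0 ≤ Gt.dist o y) :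
    Finset.univ.filter (fun v => (v ∈ H.verts ∧ Gt.dist o v = p0) ∨
      (IsLeaf Gt H v ∧ Gt.dist o v < p0)) ⊆ {z} := by
  intro v hv
  simp only [Finset.mem_filter] at hv
  rw [Finset.mem_singleton]
  rcases hv.2 with h1 | h2
  · exact min_unique htree hsub hz hzd hmin v h1.1 h1.2
  · exact absurd (hmin v h2.1.1) (by omega)

/-- Weighted Cauchy–Schwarz. -/
lemma wCS {ι : Type*} (s : Finset ι) (f g : ι → ℝ) (hg : ∀ i ∈ s, 0 < g i) :
    (∑ i ∈ s, f i) ^ 2 ≤ (∑ i ∈ s, g i) * ∑ i ∈ s, (f i) ^ 2 / g i := by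
  rcases s.eq_empty_or_nonempty with rfl | hs
  · simp
  · have hgs : 0 < ∑ i ∈ s, g i := Finset.sum_pos hg hs
    have h := Finset.sq_sum_div_le_sum_sq_div s f hg
    calc (∑ i ∈ s, f i) ^ 2 = ((∑ i ∈ s, f i) ^ 2 / ∑ i ∈ s, g i) * ∑ i ∈ s, g i := by
          field_simp
      _ ≤ (∑ i ∈ s, (f i) ^ 2 / g i) * ∑ i ∈ s, g i := by
          apply mul_le_mul_of_nonneg_right h hgs.le
      _ = (∑ i ∈ s, g i) * ∑ i ∈ s, (f i) ^ 2 / g i := mul_comm _ _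

/-- The core Hardy-type inequality on the subtree, ambient-vertex version. -/
lemma core_V (htree : Gt.IsTree) (hsub : H.coe.IsTree)
    (hz : z ∈ H.verts) (hzd : Gt.dist o z = p0)
    (hmin : ∀ y ∈ H.verts, p0 ≤ Gt.dist o y)
    (hball : ∀ v, Gt.dist o v ≤ r)
    (hdeg : ∀ v, Gt.dist o v < r → (Gt.neighborSet v).ncard = d) (hd : 3 ≤ d)
    {t : ℕ} (hp0t : p0 ≤ t) (htr : t ≤ r) (uV : V → ℝ)
    (hvanV : ∀ v ∈ H.verts, (Gt.dist o v = t ∨ (IsLeaf Gt H v ∧ Gt.dist o v < t)) →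
      uV v = 0) :
    ∑ v ∈ Finset.univ.filter (fun v => IsLeaf Gt H v), (uV v) ^ 2 ≤
      (∑ i ∈ Finset.range (r - t), ((d : ℝ) - 1) ^ i) *
        ∑ y ∈ Finset.univ.filter (fun y => y ∈ H.verts ∧ t < Gt.dist o y),
          (uV y - uV (par Gt o y)) ^ 2 := by
  have hc := htree.isConnected
  set b : ℝ := (d : ℝ) - 1 with hb
  have hd3 : (3:ℝ) ≤ (d:ℝ) := by exact_mod_cast hd
  have hbpos : 0 < b := by rw [hb]; linarith
  have hb1 : 1 ≤ b := by rw [hb]; linarith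
  set Sg : ℝ := ∑ i ∈ Finset.range (r - t), b ^ i with hSg
  have hSgnn : 0 ≤ Sg := Finset.sum_nonneg fun i _ => by positivity
  set Y := Finset.univ.filter (fun y => y ∈ H.verts ∧ t < Gt.dist o y) with hY
  set T : V → ℝ := fun y => (uV y - uV (par Gt o y)) ^ 2 / b ^ (r - Gt.dist o y) with hT
  have hTnn : ∀ y, 0 ≤ T y := fun y => by rw [hT]; positivity
  -- Split the leaf sum
  rw [← Finset.sum_filter_add_sum_filter_not
    (Finset.univ.filter (fun v => IsLeaf Gt H v)) (fun v => t < Gt.dist o v)]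
  have hshallow : ∑ v ∈ (Finset.univ.filter (fun v => IsLeaf Gt H v)).filter
      (fun v => ¬ t < Gt.dist o v), (uV v) ^ 2 = 0 := by
    apply Finset.sum_eq_zero
    intro v hv
    simp only [Finset.mem_filter] at hv
    have hvH := hv.1.2.1
    have hvt : Gt.dist o v ≤ t := by omega
    rcases eq_or_lt_of_le hvt with he | hl
    · rw [hvanV v hvH (Or.inl he)]; ring
    · rw [hvanV v hvH (Or.inr ⟨hv.1.2, hl⟩)]; ring
  rw [hshallow, add_zero]
  set OL := (Finset.univ.filter (fun v => IsLeaf Gt H v)).filter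
    (fun v => t < Gt.dist o v) with hOL
  -- Chain analysis per deep leaf
  have hperleaf : ∀ x ∈ OL, (uV x) ^ 2 ≤
      Sg * ∑ y ∈ Finset.univ.filter (fun y => t < Gt.dist o y ∧ descnd Gt o y x), T y := by
    intro x hx
    simp only [hOL, Finset.mem_filter] at hx
    obtain ⟨⟨-, hleaf⟩, hdeep⟩ := hx
    have hxH : x ∈ H.verts := hleaf.1
    set px := Gt.dist o x with hpx
    set n := px - t with hn
    have hpxr : px ≤ r := hball x
    -- telescoping
    have gmem : ∀ i, i ≤ n → anc Gt o x (t + i) ∈ H.verts := by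
      intro i hi
      exact anc_mem_H htree hsub hz hzd hmin hxH (by omega) (by omega)
    have gdist : ∀ i, i ≤ n → Gt.dist o (anc Gt o x (t + i)) = t + i := by
      intro i hi
      exact (anc_spec htree (by omega)).2
    have htele : uV x = ∑ i ∈ Finset.range n,
        (uV (anc Gt o x (t + (i + 1))) - uV (anc Gt o x (t + i))) := by
      rw [Finset.sum_range_sub (fun i => uV (anc Gt o x (t + i)))]
      have h1 : t + n = px := by omega
      rw [h1]
      rw [show anc Gt o x px = x from by rw [hpx]; exact anc_self o x]
      have h0 : uV (anc Gt o x (t + 0)) = 0 := by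
        apply hvanV _ (gmem 0 (by omega))
        left
        simpa using gdist 0 (by omega)
      rw [add_zero] at h0 ⊢
      rw [h0, sub_zero]
    -- Cauchy-Schwarz with weights b^(r-t-1-i)
    have hCS : (uV x) ^ 2 ≤
        (∑ i ∈ Finset.range n, b ^ (r - t - 1 - i)) *
          ∑ i ∈ Finset.range n,
            (uV (anc Gt o x (t + (i + 1))) - uV (anc Gt o x (t + i))) ^ 2 /
              b ^ (r - t - 1 - i) := by
      rw [htele]
      exact wCS _ _ _ (fun i _ => by positivity)
    have hweights : (∑ i ∈ Finset.range n, b ^ (r - t - 1 - i)) ≤ Sg := by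
      rw [hSg]
      have hinj : Set.InjOn (fun i => r - t - 1 - i) (Finset.range n) := by
        intro i hi j hj hij
        simp only [Finset.coe_range, Set.mem_Iio] at hi hj
        simp only at hij
        omega
      rw [← Finset.sum_image (fun i hi j hj h => hinj hi hj h)]
      apply Finset.sum_le_sum_of_subset_of_nonneg
      · intro e he
        simp only [Finset.mem_image, Finset.mem_range] at he ⊢
        obtain ⟨i, hi, hie⟩ := he
        omega
      · intro e _ _
        positivity
    -- rewrite the CS RHS sum as a chain sum
    have hchain : ∑ i ∈ Finset.range n,
        (uV (anc Gt o x (t + (i + 1))) - uV (anc Gt o x (t + i))) ^ 2 /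
          b ^ (r - t - 1 - i) =
        ∑ y ∈ Finset.univ.filter (fun y => t < Gt.dist o y ∧ descnd Gt o y x), T y := by
      have hset : Finset.univ.filter (fun y => t < Gt.dist o y ∧ descnd Gt o y x) =
          (Finset.range n).image (fun i => anc Gt o x (t + (i + 1))) := by
        ext y
        simp only [Finset.mem_filter, Finset.mem_image, Finset.mem_range, Finset.mem_univ,
          true_and]
        constructor
        · rintro ⟨hyt, hyd⟩
          have hyanc := anc_unique htree hyd
          have hydist : t < Gt.dist o y ∧ Gt.dist o y ≤ px := by
            unfold descnd at hyd
            constructor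
            · exact hyt
            · omega
          refine ⟨Gt.dist o y - t - 1, by omega, ?_⟩
          rw [show t + (Gt.dist o y - t - 1 + 1) = Gt.dist o y from by omega]
          exact hyanc.symm
        · rintro ⟨i, hi, hiy⟩
          subst hiy
          constructor
          · rw [gdist (i + 1) (by omega)]; omega
          · exact (anc_spec htree (x := x) (q := t + (i + 1)) (by omega)).1
      rw [hset]
      rw [Finset.sum_image (fun i hi j hj h => by
        have di := gdist (i + 1) (by simp only [Finset.mem_coe, Finset.mem_range] at hi; omega)
        have dj := gdist (j + 1) (by simp only [Finset.mem_coe, Finset.mem_range] at hj; omega)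
        have : t + (i + 1) = t + (j + 1) := by rw [← di, ← dj, h]
        omega)]
      apply Finset.sum_congr rfl
      intro i hi
      simp only [Finset.mem_range] at hi
      simp only [hT]
      have hpar : par Gt o (anc Gt o x (t + (i + 1))) = anc Gt o x (t + i) := by
        have := par_anc htree (o := o) (x := x) (q := t + i) (by omega)
        rwa [show t + i + 1 = t + (i + 1) from by omega] at this
      rw [hpar, gdist (i + 1) (by omega)]
      congr 2
      omega
    rw [hchain] at hCS
    calc (uV x) ^ 2 ≤ _ := hCS
      _ ≤ Sg * ∑ y ∈ Finset.univ.filter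
            (fun y => t < Gt.dist o y ∧ descnd Gt o y x), T y := by
          apply mul_le_mul_of_nonneg_right hweights
          apply Finset.sum_nonneg
          intro y _
          exact hTnn y
  -- Sum over leaves and exchange the order of summation
  have hstep1 : ∑ x ∈ OL, (uV x) ^ 2 ≤
      Sg * ∑ x ∈ OL, ∑ y ∈ Finset.univ.filter
        (fun y => t < Gt.dist o y ∧ descnd Gt o y x), T y := by
    rw [Finset.mul_sum]
    exact Finset.sum_le_sum hperleaf
  have hstep2 : ∑ x ∈ OL, ∑ y ∈ Finset.univ.filter
      (fun y => t < Gt.dist o y ∧ descnd Gt o y x), T y ≤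
      ∑ y ∈ Y, (uV y - uV (par Gt o y)) ^ 2 := by
    have hswap : ∑ x ∈ OL, ∑ y ∈ Finset.univ.filter
        (fun y => t < Gt.dist o y ∧ descnd Gt o y x), T y =
        ∑ y ∈ Finset.univ, T y *
          ((OL.filter (fun x => t < Gt.dist o y ∧ descnd Gt o y x)).card : ℝ) := by
      have h1 : ∀ x ∈ OL, ∑ y ∈ Finset.univ.filter
          (fun y => t < Gt.dist o y ∧ descnd Gt o y x), T y =
          ∑ y ∈ Finset.univ, if t < Gt.dist o y ∧ descnd Gt o y x then T y else 0 := by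
        intro x _
        rw [Finset.sum_filter]
      rw [Finset.sum_congr rfl h1, Finset.sum_comm]
      apply Finset.sum_congr rfl
      intro y _
      rw [← Finset.sum_filter, Finset.sum_const, nsmul_eq_mul, mul_comm]
    rw [hswap]
    have hYsum : ∑ y ∈ Y, (uV y - uV (par Gt o y)) ^ 2 =
        ∑ y ∈ Finset.univ, if y ∈ H.verts ∧ t < Gt.dist o y then
          (uV y - uV (par Gt o y)) ^ 2 else 0 := by
      rw [hY, Finset.sum_filter]
    rw [hYsum]
    apply Finset.sum_le_sum
    intro y _
    set N := (OL.filter (fun x => t < Gt.dist o y ∧ descnd Gt o y x)).card with hN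
    rcases Nat.eq_zero_or_pos N with h0 | hpos
    · rw [h0]
      simp only [Nat.cast_zero, mul_zero]
      split
      · positivity
      · exact le_rfl
    · rw [hN] at hpos
      obtain ⟨x, hxmem⟩ := Finset.card_pos.mp hpos
      simp only [Finset.mem_filter, hOL] at hxmem
      obtain ⟨⟨⟨-, hxleaf⟩, -⟩, hyt, hyd⟩ := hxmem
      have hyH : y ∈ H.verts := by
        have := anc_unique htree hyd
        rw [this]
        refine anc_mem_H htree hsub hz hzd hmin hxleaf.1 (by omega) ?_
        unfold descnd at hyd
        omega
      rw [if_pos ⟨hyH, hyt⟩]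
      -- multiplicity bound
      have hNle : N ≤ (d - 1) ^ (r - Gt.dist o y) := by
        rw [hN]
        apply le_trans (Finset.card_le_card (show
          OL.filter (fun x => t < Gt.dist o y ∧ descnd Gt o y x) ⊆
            Finset.univ.filter (fun x => IsLeaf Gt H x ∧ descnd Gt o y x) from ?_))
        · exact leaf_count htree hsub hz hzd hmin hball hdeg hd (r - Gt.dist o y) y hyH
            (by omega) le_rfl
        · intro w hw
          simp only [Finset.mem_filter, hOL] at hw ⊢
          exact ⟨Finset.mem_univ _, hw.1.1.2, hw.2.2⟩
      have hcast : (N : ℝ) ≤ b ^ (r - Gt.dist o y) := by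
        calc (N : ℝ) ≤ (((d - 1) ^ (r - Gt.dist o y) : ℕ) : ℝ) := by exact_mod_cast hNle
          _ = b ^ (r - Gt.dist o y) := by
              rw [Nat.cast_pow, hb]
              congr 1
              have : (1:ℕ) ≤ d := by omega
              push_cast [this]
              ring
      rw [hT]
      calc (uV y - uV (par Gt o y)) ^ 2 / b ^ (r - Gt.dist o y) * (N : ℝ)
          ≤ (uV y - uV (par Gt o y)) ^ 2 / b ^ (r - Gt.dist o y) *
            b ^ (r - Gt.dist o y) := by
            apply mul_le_mul_of_nonneg_left hcast
            positivity
        _ = (uV y - uV (par Gt o y)) ^ 2 := by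
            rw [div_mul_cancel₀]
            positivity
  exact le_trans hstep1 (mul_le_mul_of_nonneg_left hstep2 hSgnn)

variable (H) in
/-- Extension of a function on the subgraph vertices by zero. -/
noncomputable def extendH (u : ↥H.verts → ℝ) : V → ℝ :=
  fun v => if h : v ∈ H.verts then u ⟨v, h⟩ else 0

lemma leaf_iff [Fintype ↥H.verts] (x : ↥H.verts) :
    x ∈ combBoundary H.coe ↔ IsLeaf Gt H (x : V) := by
  have himg : Subtype.val '' (H.coe.neighborSet x) = {w : V | H.Adj (x : V) w} := by
    ext w
    constructor
    · rintro ⟨w', hw', rfl⟩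
      rw [SimpleGraph.mem_neighborSet, SimpleGraph.Subgraph.coe_adj] at hw'
      exact hw'
    · intro hw
      exact ⟨⟨w, hw.snd_mem⟩, by rwa [SimpleGraph.mem_neighborSet,
        SimpleGraph.Subgraph.coe_adj], rfl⟩
  have hcard : (H.coe.neighborSet x).ncard = ({w : V | H.Adj (x : V) w}).ncard := by
    rw [← himg, Set.ncard_image_of_injective _ Subtype.val_injective]
  constructor
  · intro hx
    exact ⟨x.2, by rw [← hcard]; exact hx⟩
  · intro hx
    show (H.coe.neighborSet x).ncard ≤ 1
    rw [hcard]
    exact hx.2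

lemma bInner_transfer [Fintype ↥H.verts] (u : ↥H.verts → ℝ) :
    bInner (combBoundary H.coe) (fun _ => 1) u u =
      ∑ v ∈ Finset.univ.filter (fun v => IsLeaf Gt H v), (extendH H u v) ^ 2 := by
  rw [bInner]
  have h1 : ∀ x : ↥H.verts, (if x ∈ combBoundary H.coe then u x * u x * 1 else 0) =
      (fun v : V => if IsLeaf Gt H v then (extendH H u v) ^ 2 else 0) (x : V) := by
    intro x
    simp only
    by_cases hx : x ∈ combBoundary H.coe
    · rw [if_pos hx, if_pos ((leaf_iff x).mp hx)]
      simp only [extendH]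
      rw [dif_pos x.2]
      simp only [Subtype.coe_eta]
      ring
    · rw [if_neg hx, if_neg (fun h => hx ((leaf_iff x).mpr h))]
  rw [Finset.sum_congr rfl (fun x _ => h1 x)]
  rw [← Finset.sum_subtype (Finset.univ.filter (fun v => v ∈ H.verts))
    (by simp) (fun v : V => if IsLeaf Gt H v then (extendH H u v) ^ 2 else 0)]
  rw [← Finset.sum_filter, Finset.filter_filter]
  apply Finset.sum_congr _ (fun _ _ => rfl)
  ext v
  simp only [Finset.mem_filter, Finset.mem_univ, true_and]
  exact ⟨fun h => h.2, fun h => ⟨h.1, h⟩⟩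

lemma energy_transfer [Fintype ↥H.verts] (u : ↥H.verts → ℝ) :
    energy H.coe (fun _ _ => 1) u =
      (∑ v : V, ∑ w : V, if H.Adj v w then (extendH H u w - extendH H u v) ^ 2 else 0) / 2 := by
  rw [energy]
  congr 1
  have h1 : ∀ x : ↥H.verts, (∑ y : ↥H.verts, if H.coe.Adj x y then
      1 * (u y - u x) ^ 2 else 0) =
      (fun v : V => ∑ w : V, if H.Adj v w then (extendH H u w - extendH H u v) ^ 2 else 0)
        (x : V) := by
    intro x
    simp only
    have h2 : ∀ y : ↥H.verts, (if H.coe.Adj x y then 1 * (u y - u x) ^ 2 else 0) =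
        (fun w : V => if H.Adj (x : V) w then
          (extendH H u w - extendH H u (x : V)) ^ 2 else 0) (y : V) := by
      intro y
      simp only [SimpleGraph.Subgraph.coe_adj]
      by_cases hxy : H.Adj (x : V) (y : V)
      · rw [if_pos hxy, if_pos hxy]
        simp only [extendH]
        rw [dif_pos x.2, dif_pos y.2]
        simp only [Subtype.coe_eta]
        ring
      · rw [if_neg hxy, if_neg hxy]
    rw [Finset.sum_congr rfl (fun y _ => h2 y)]
    rw [← Finset.sum_subtype (Finset.univ.filter (fun v => v ∈ H.verts)) (by simp)
      (fun w : V => if H.Adj (x : V) w then (extendH H u w - extendH H u (x : V)) ^ 2 else 0)]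
    apply Finset.sum_subset (Finset.filter_subset _ _)
    intro w _ hw
    simp only [Finset.mem_filter, Finset.mem_univ, true_and] at hw
    rw [if_neg (fun h : H.Adj _ w => hw h.snd_mem)]
  refine (Finset.sum_congr rfl (fun x _ => h1 x)).trans ?_
  rw [← Finset.sum_subtype (Finset.univ.filter (fun v => v ∈ H.verts)) (by simp)
    (fun v : V => ∑ w : V, if H.Adj v w then (extendH H u w - extendH H u v) ^ 2 else 0)]
  apply Finset.sum_subset (Finset.filter_subset _ _)
  intro v _ hv
  simp only [Finset.mem_filter, Finset.mem_univ, true_and] at hv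
  apply Finset.sum_eq_zero
  intro w _
  rw [if_neg (fun h : H.Adj v w => hv h.fst_mem)]

/-- The energy dominates the sum of squared parent-edge differences over deep vertices. -/
lemma energy_pairs (htree : Gt.IsTree) (hsub : H.coe.IsTree)
    (hz : z ∈ H.verts) (hzd : Gt.dist o z = p0)
    (hmin : ∀ y ∈ H.verts, p0 ≤ Gt.dist o y)
    {t : ℕ} (hp0t : p0 ≤ t) (uV : V → ℝ) :
    ∑ y ∈ Finset.univ.filter (fun y => y ∈ H.verts ∧ t < Gt.dist o y),
      (uV y - uV (par Gt o y)) ^ 2 ≤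
    (∑ v : V, ∑ w : V, if H.Adj v w then (uV w - uV v) ^ 2 else 0) / 2 := by
  set Y := Finset.univ.filter (fun y => y ∈ H.verts ∧ t < Gt.dist o y) with hY
  set F : V × V → ℝ := fun p => if H.Adj p.1 p.2 then (uV p.2 - uV p.1) ^ 2 else 0 with hF
  have hFnn : ∀ p, 0 ≤ F p := by
    intro p
    rw [hF]
    dsimp only
    split <;> positivity
  have hYfact : ∀ y ∈ Y, H.Adj (par Gt o y) y ∧
      Gt.dist o (par Gt o y) + 1 = Gt.dist o y := by
    intro y hy
    simp only [hY, Finset.mem_filter] at hy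
    have hyH := hy.2.1
    have hynez : y ≠ z := by
      intro he
      rw [he, hzd] at hy
      omega
    obtain ⟨h1, h2⟩ := (min_ascend htree hsub hz hzd hmin y hyH).2 hynez
    exact ⟨h2, (par_spec htree (o := o) (v := y) (by omega)).2⟩
  set S1 := Y.image (fun y => (par Gt o y, y)) with hS1
  set S2 := Y.image (fun y => (y, par Gt o y)) with hS2
  have hinj1 : Set.InjOn (fun y => (par Gt o y, y)) Y := by
    intro a _ b _ h
    exact congrArg Prod.snd h
  have hinj2 : Set.InjOn (fun y => (y, par Gt o y)) Y := by
    intro a _ b _ h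
    exact congrArg Prod.fst h
  have hdisj : Disjoint S1 S2 := by
    rw [Finset.disjoint_left]
    intro p hp1 hp2
    simp only [hS1, hS2, Finset.mem_image] at hp1 hp2
    obtain ⟨y1, hy1, he1⟩ := hp1
    obtain ⟨y2, hy2, he2⟩ := hp2
    have d1 := (hYfact y1 hy1).2
    have d2 := (hYfact y2 hy2).2
    have e1a : p.1 = par Gt o y1 := by rw [← he1]
    have e1b : p.2 = y1 := by rw [← he1]
    have e2a : p.1 = y2 := by rw [← he2]
    have e2b : p.2 = par Gt o y2 := by rw [← he2]
    rw [← e1a, ← e1b] at d1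
    rw [← e2b, ← e2a] at d2
    omega
  have hsum1 : ∑ p ∈ S1, F p = ∑ y ∈ Y, (uV y - uV (par Gt o y)) ^ 2 := by
    rw [hS1, Finset.sum_image (fun a ha b hb h => hinj1 ha hb h)]
    apply Finset.sum_congr rfl
    intro y hy
    rw [hF]
    simp only
    rw [if_pos (hYfact y hy).1]
  have hsum2 : ∑ p ∈ S2, F p = ∑ y ∈ Y, (uV y - uV (par Gt o y)) ^ 2 := by
    rw [hS2, Finset.sum_image (fun a ha b hb h => hinj2 ha hb h)]
    apply Finset.sum_congr rfl
    intro y hy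
    rw [hF]
    simp only
    rw [if_pos (hYfact y hy).1.symm]
    ring
  have hdouble : ∑ v : V, ∑ w : V, (if H.Adj v w then (uV w - uV v) ^ 2 else 0) =
      ∑ p ∈ Finset.univ ×ˢ Finset.univ, F p := by
    rw [Finset.sum_product]
  have hle : ∑ p ∈ S1 ∪ S2, F p ≤ ∑ p ∈ Finset.univ ×ˢ Finset.univ, F p := by
    apply Finset.sum_le_sum_of_subset_of_nonneg
    · intro p _
      simp [Finset.mem_product]
    · intro p _ _
      exact hFnn p
  rw [Finset.sum_union hdisj, hsum1, hsum2] at hle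
  rw [hdouble]
  linarith

end Subtree

section LinAlg

variable {W : Type*} [Fintype W]

lemma exists_vanishing {E : Submodule ℝ (W → ℝ)} {j : ℕ}
    (hrank : Module.finrank ℝ E = j) (S : Finset W) (hS : S.card < j) :
    ∃ u ∈ E, u ≠ 0 ∧ ∀ x ∈ S, u x = 0 := by
  classical
  set T : E →ₗ[ℝ] (↥S → ℝ) :=
    { toFun := fun u => fun q => (u : W → ℝ) q.1
      map_add' := fun u v => rfl
      map_smul' := fun c u => rfl } with hT
  have hker : LinearMap.ker T ≠ ⊥ := by
    intro hbot
    have hinj : Function.Injective T := LinearMap.ker_eq_bot.mp hbot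
    have h1 : Module.finrank ℝ E ≤ Module.finrank ℝ (↥S → ℝ) :=
      LinearMap.finrank_le_finrank_of_injective hinj
    rw [hrank, Module.finrank_fintype_fun_eq_card, Fintype.card_coe] at h1
    omega
  obtain ⟨u, hu, hune⟩ := Submodule.ne_bot_iff _ |>.mp hker
  refine ⟨(u : W → ℝ), u.2, ?_, ?_⟩
  · intro h0
    apply hune
    ext
    rw [h0]
    rfl
  · intro x hx
    have := LinearMap.mem_ker.mp hu
    have h2 : T u ⟨x, hx⟩ = 0 := by rw [this]; rfl
    exact h2

lemma steklov_nonempty (G : SimpleGraph W) (B : Set W) {j : ℕ} (hj : j ≤ B.ncard) :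
    ∃ σ : ℝ, ∃ E : Submodule ℝ (W → ℝ), Module.finrank ℝ E = j ∧
      (∀ u ∈ E, (∀ x ∈ B, u x = 0) → u = 0) ∧
      ∀ u ∈ E, energy G (fun _ _ => 1) u ≤ σ * bInner B (fun _ => 1) u u := by
  classical
  rw [Set.ncard_eq_toFinset_card'] at hj
  obtain ⟨T, hTB, hTcard⟩ := Finset.exists_subset_card_eq hj
  set e : Fin j → W := fun i => (T.equivFin.symm (Fin.cast hTcard.symm i) : W) with he
  have he_inj : Function.Injective e := by
    intro a b hab
    have := Subtype.val_injective hab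
    have := T.equivFin.symm.injective this
    exact Fin.cast_injective _ this
  have he_mem : ∀ i, e i ∈ B := by
    intro i
    have : e i ∈ T := (T.equivFin.symm (Fin.cast hTcard.symm i)).2
    have := hTB this
    rwa [Set.mem_toFinset] at this
  set f : Fin j → (W → ℝ) := fun i => Pi.single (e i) 1 with hf
  have happ : ∀ (c : Fin j → ℝ) (v : W),
      (∑ i, c i • f i) v = ∑ i, c i * (if v = e i then 1 else 0) := by
    intro c v
    rw [Finset.sum_apply]
    apply Finset.sum_congr rfl
    intro i _
    rw [Pi.smul_apply, hf]
    simp only [Pi.single_apply, smul_eq_mul]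
  have happ1 : ∀ (c : Fin j → ℝ) (i₀ : Fin j), (∑ i, c i • f i) (e i₀) = c i₀ := by
    intro c i₀
    rw [happ]
    rw [Finset.sum_eq_single i₀]
    · rw [if_pos rfl, mul_one]
    · intro i _ hne
      rw [if_neg (fun h => hne (he_inj h.symm)), mul_zero]
    · intro h
      exact absurd (Finset.mem_univ i₀) h
  have happ2 : ∀ (c : Fin j → ℝ) (v : W), (∀ i, v ≠ e i) → (∑ i, c i • f i) v = 0 := by
    intro c v hv
    rw [happ]
    apply Finset.sum_eq_zero
    intro i _
    rw [if_neg (hv i), mul_zero]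
  have hLI : LinearIndependent ℝ f := by
    rw [Fintype.linearIndependent_iff]
    intro g hg i
    have := congrFun hg (e i)
    rw [happ1] at this
    simpa using this
  refine ⟨2 * (Fintype.card W : ℝ), Submodule.span ℝ (Set.range f), ?_, ?_, ?_⟩
  · rw [finrank_span_eq_card hLI, Fintype.card_fin]
  · intro u hu hB
    obtain ⟨c, hc⟩ := (Submodule.mem_span_range_iff_exists_fun ℝ).mp hu
    funext v
    rw [Pi.zero_apply]
    by_cases hv : ∃ i, e i = v
    · obtain ⟨i, rfl⟩ := hv
      exact hB (e i) (he_mem i)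
    · push_neg at hv
      rw [← hc]
      exact happ2 c v (fun i h => hv i h.symm)
  · intro u hu
    obtain ⟨c, hc⟩ := (Submodule.mem_span_range_iff_exists_fun ℝ).mp hu
    have hzero : ∀ v : W, v ∉ Finset.univ.image e → u v = 0 := by
      intro v hv
      rw [← hc]
      apply happ2
      intro i h
      exact hv (Finset.mem_image.mpr ⟨i, Finset.mem_univ i, h.symm⟩)
    have hsq : ∑ v : W, (u v) ^ 2 = ∑ i, (u (e i)) ^ 2 := by
      have h5 : ∑ v ∈ Finset.univ.image e, (u v) ^ 2 = ∑ i, (u (e i)) ^ 2 :=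
        Finset.sum_image (fun a _ b _ h => he_inj h)
      rw [← h5]
      symm
      apply Finset.sum_subset (Finset.subset_univ _)
      intro v _ hv
      rw [hzero v hv]
      ring
    have hbinner : ∑ i, (u (e i)) ^ 2 ≤ bInner B (fun _ => 1) u u := by
      rw [bInner]
      have h1 : ∀ v : W, (if v ∈ Finset.univ.image e then (u v) ^ 2 else 0) ≤
          (if v ∈ B then u v * u v * 1 else 0) := by
        intro v
        by_cases hv : v ∈ Finset.univ.image e
        · rw [if_pos hv]
          obtain ⟨i, -, rfl⟩ := Finset.mem_image.mp hv
          rw [if_pos (he_mem i)]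
          nlinarith [sq_nonneg (u (e i))]
        · rw [if_neg hv]
          split
          · nlinarith [mul_self_nonneg (u v)]
          · exact le_rfl
      calc ∑ i, (u (e i)) ^ 2
          = ∑ v ∈ Finset.univ.image e, (u v) ^ 2 := by
            have h5 : ∑ v ∈ Finset.univ.image e, (u v) ^ 2 = ∑ i, (u (e i)) ^ 2 :=
              Finset.sum_image (fun a _ b _ h => he_inj h)
            rw [h5]
        _ = ∑ v : W, if v ∈ Finset.univ.image e then (u v) ^ 2 else 0 := by
            rw [Finset.sum_ite_mem, Finset.univ_inter]
        _ ≤ ∑ v : W, if v ∈ B then u v * u v * 1 else 0 := Finset.sum_le_sum fun v _ => h1 v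
    have henergy : energy G (fun _ _ => 1) u ≤
        2 * (Fintype.card W : ℝ) * ∑ v : W, (u v) ^ 2 := by
      rw [energy]
      have h2 : ∀ x y : W, (if G.Adj x y then 1 * (u y - u x) ^ 2 else 0) ≤
          2 * (u x) ^ 2 + 2 * (u y) ^ 2 := by
        intro x y
        split
        · nlinarith [sq_nonneg (u x + u y)]
        · nlinarith [sq_nonneg (u x), sq_nonneg (u y)]
      have h3 : ∑ x : W, ∑ y : W, (if G.Adj x y then 1 * (u y - u x) ^ 2 else 0) ≤
          ∑ x : W, ∑ y : W, (2 * (u x) ^ 2 + 2 * (u y) ^ 2) :=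
        Finset.sum_le_sum fun x _ => Finset.sum_le_sum fun y _ => h2 x y
      have h4 : ∑ x : W, ∑ y : W, (2 * (u x) ^ 2 + 2 * (u y) ^ 2) =
          4 * (Fintype.card W : ℝ) * ∑ v : W, (u v) ^ 2 := by
        rw [Finset.sum_comm (f := fun x y => 2 * (u x) ^ 2 + 2 * (u y) ^ 2)]
        simp only [Finset.sum_add_distrib, Finset.sum_const, Finset.card_univ, nsmul_eq_mul,
          ← Finset.mul_sum]
        ring
      rw [div_le_iff₀ (by norm_num : (0:ℝ) < 2)]
      calc ∑ x : W, ∑ y : W, (if G.Adj x y then 1 * (u y - u x) ^ 2 else 0)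
          ≤ 4 * (Fintype.card W : ℝ) * ∑ v : W, (u v) ^ 2 := le_trans h3 (le_of_eq h4)
        _ = 2 * (Fintype.card W : ℝ) * (∑ v : W, (u v) ^ 2) * 2 := by ring
    calc energy G (fun _ _ => 1) u ≤ 2 * (Fintype.card W : ℝ) * ∑ v : W, (u v) ^ 2 := henergy
      _ = 2 * (Fintype.card W : ℝ) * ∑ i, (u (e i)) ^ 2 := by rw [hsq]
      _ ≤ 2 * (Fintype.card W : ℝ) * bInner B (fun _ => 1) u u := by
          apply mul_le_mul_of_nonneg_left hbinner
          positivity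

end LinAlg

end SteklovAux

/-- **Theorem 5.11 (1).** Let `r ≥ 1`, `d ≥ 3`, and let `G` be a nontrivial subtree of
the ball `T(r,d)` of radius `r` in the homogeneous tree of degree `d` (characterized
intrinsically: a finite tree with root `o` such that every vertex is within distance
`r` of `o` and every vertex at distance `< r` has degree `d`), viewed as a
combinatorial tree with boundary. Then for every `2 ≤ j ≤ |L(G)|` and every
`k ∈ {2,…,r+1}` with `d(d-1)^{k-3} < j ≤ d(d-1)^{k-2}` (`2 ≤ j ≤ d` when `k = 2`),
one has `σ_j(G) ≥ (d-2)/((d-1)^{r+2-k} - 1)`. -/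
theorem homogeneous_ball_subtree_lower
    {V : Type*} [Fintype V] (Gt : SimpleGraph V) (o : V) (r d : ℕ)
    (hr : 1 ≤ r) (hd : 3 ≤ d) (htree : Gt.IsTree)
    (hball : ∀ v, Gt.dist o v ≤ r)
    (hdeg : ∀ v, Gt.dist o v < r → (Gt.neighborSet v).ncard = d)
    (H : Gt.Subgraph) (hsub : H.coe.IsTree) (hnt : H.verts.Nontrivial) :
    ∀ j k : ℕ, 2 ≤ j → j ≤ (combBoundary H.coe).ncard → 2 ≤ k → k ≤ r + 1 →
      (k = 2 ∧ 2 ≤ j ∨ 3 ≤ k ∧ d * (d - 1) ^ (k - 3) < j) →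
      j ≤ d * (d - 1) ^ (k - 2) →
      ((d : ℝ) - 2) / (((d : ℝ) - 1) ^ (r + 2 - k) - 1) ≤
        steklov H.coe (combBoundary H.coe) (fun _ => 1) (fun _ _ => 1) j := by
  classical
  intro j k hj2 hjL hk2 hkr hjlow hjhigh
  -- minimum-depth vertex of H
  have hFne : (Finset.univ.filter (fun v => v ∈ H.verts)).Nonempty := by
    obtain ⟨a, ha, -⟩ := hnt
    exact ⟨a, by simp [ha]⟩
  obtain ⟨z, hzF, hminF⟩ := Finset.exists_min_image _ (Gt.dist o) hFne
  have hz : z ∈ H.verts := by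
    simpa using hzF
  have hmin : ∀ y ∈ H.verts, Gt.dist o z ≤ Gt.dist o y := by
    intro y hy
    exact hminF y (by simp [hy])
  have hp0r : Gt.dist o z < r := by
    obtain ⟨y, hyH, hyne⟩ := hnt.exists_ne z
    have h1 := (SteklovAux.min_ascend htree hsub hz rfl hmin y hyH).1
    have h2 : Gt.dist z y ≠ 0 := by
      intro h0
      exact hyne ((htree.isConnected z y).dist_eq_zero_iff.mp h0).symm
    have := hball y
    omega
  set t := max (Gt.dist o z) (k - 2) with ht
  have hp0t : Gt.dist o z ≤ t := le_max_left _ _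
  have hkt : k - 2 ≤ t := le_max_right _ _
  have htr : t < r := max_lt hp0r (by omega)
  -- the vanishing set, in the subtype world
  set ZW : Finset ↥H.verts := Finset.univ.filter
    (fun x : ↥H.verts => Gt.dist o (x : V) = t ∨
      (SteklovAux.IsLeaf Gt H (x : V) ∧ Gt.dist o (x : V) < t)) with hZW
  have hZV : ZW.card ≤ (Finset.univ.filter (fun v => (v ∈ H.verts ∧ Gt.dist o v = t) ∨
      (SteklovAux.IsLeaf Gt H v ∧ Gt.dist o v < t))).card := by
    refine Finset.card_le_card_of_injOn (fun x => (x : V)) ?_ ?_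
    · intro x hx
      simp only [hZW, Finset.mem_coe, Finset.mem_filter, Finset.mem_univ, true_and] at hx ⊢
      rcases hx with h | h
      · exact Or.inl ⟨x.2, h⟩
      · exact Or.inr h
    · exact Set.injOn_of_injective Subtype.val_injective
  have hZcard : ZW.card < j := by
    by_cases hcase : k - 2 ≤ Gt.dist o z
    · have htp : t = Gt.dist o z := max_eq_left hcase
      have h1 : (Finset.univ.filter (fun v => (v ∈ H.verts ∧ Gt.dist o v = t) ∨
          (SteklovAux.IsLeaf Gt H v ∧ Gt.dist o v < t))) ⊆ {z} := by
        rw [htp]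
        exact SteklovAux.Zcard_min htree hsub hz rfl hmin
      have h2 := Finset.card_le_card h1
      rw [Finset.card_singleton] at h2
      omega
    · push_neg at hcase
      have hk3 : 3 ≤ k := by
        rcases hjlow with ⟨hke, -⟩ | ⟨hk3, -⟩
        · omega
        · exact hk3
      have hjlow' : d * (d - 1) ^ (k - 3) < j := by
        rcases hjlow with ⟨hke, -⟩ | ⟨-, h⟩
        · omega
        · exact h
      have htp : t = k - 2 := max_eq_right (le_of_lt hcase)
      have h1 := SteklovAux.Zcard (r := r) htree hsub hz rfl hmin hball hdeg hd
        (t := t) (by omega) htr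
      have h2 : d * (d - 1) ^ (t - 1) = d * (d - 1) ^ (k - 3) := by
        rw [show t - 1 = k - 3 from by omega]
      calc ZW.card ≤ _ := hZV
        _ ≤ d * (d - 1) ^ (t - 1) := h1
        _ = d * (d - 1) ^ (k - 3) := h2
        _ < j := hjlow'
  -- geometric sums
  have hd3 : (3:ℝ) ≤ (d:ℝ) := by exact_mod_cast hd
  have hs1 : 1 ≤ r + 2 - k := by omega
  have hSgs1 : (1:ℝ) ≤ ∑ i ∈ Finset.range (r + 2 - k), ((d:ℝ) - 1) ^ i := by
    have := Finset.single_le_sum (f := fun i => ((d:ℝ) - 1) ^ i)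
      (fun i _ => pow_nonneg (by linarith) i)
      (Finset.mem_range.mpr (by omega : 0 < r + 2 - k))
    simpa using this
  have hgeom : ((d:ℝ) - 2) * ∑ i ∈ Finset.range (r + 2 - k), ((d:ℝ) - 1) ^ i =
      ((d:ℝ) - 1) ^ (r + 2 - k) - 1 := by
    have h := geom_sum_mul ((d:ℝ) - 1) (r + 2 - k)
    calc ((d:ℝ) - 2) * ∑ i ∈ Finset.range (r + 2 - k), ((d:ℝ) - 1) ^ i
        = (∑ i ∈ Finset.range (r + 2 - k), ((d:ℝ) - 1) ^ i) * (((d:ℝ) - 1) - 1) := by ring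
      _ = ((d:ℝ) - 1) ^ (r + 2 - k) - 1 := h
  have hden : (0:ℝ) < ((d:ℝ) - 1) ^ (r + 2 - k) - 1 := by
    rw [← hgeom]
    nlinarith [hSgs1]
  have hcnn : (0:ℝ) ≤ ((d : ℝ) - 2) / (((d : ℝ) - 1) ^ (r + 2 - k) - 1) :=
    div_nonneg (by linarith) hden.le
  have hcS : ((d : ℝ) - 2) / (((d : ℝ) - 1) ^ (r + 2 - k) - 1) *
      ∑ i ∈ Finset.range (r + 2 - k), ((d:ℝ) - 1) ^ i = 1 := by
    have hpos : (0:ℝ) < ((d:ℝ) - 2) * ∑ i ∈ Finset.range (r + 2 - k), ((d:ℝ) - 1) ^ i := by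
      nlinarith [hSgs1]
    rw [← hgeom]
    field_simp
    exact div_self (by linarith)
  -- min-max
  rw [steklov]
  apply le_csInf
  · obtain ⟨σ₀, E₀, h1, h2, h3⟩ := SteklovAux.steklov_nonempty H.coe (combBoundary H.coe) hjL
    exact ⟨σ₀, E₀, h1, h2, h3⟩
  rintro σ ⟨E, hrank, hinjE, hbound⟩
  obtain ⟨u, huE, hune, huvan⟩ := SteklovAux.exists_vanishing hrank ZW hZcard
  -- vanishing on Z in the ambient world
  have hvanV : ∀ v ∈ H.verts, (Gt.dist o v = t ∨ (SteklovAux.IsLeaf Gt H v ∧ Gt.dist o v < t)) →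
      SteklovAux.extendH H u v = 0 := by
    intro v hv hcond
    have : SteklovAux.extendH H u v = u ⟨v, hv⟩ := by
      simp only [SteklovAux.extendH]
      rw [dif_pos hv]
    rw [this]
    apply huvan
    simp only [hZW, Finset.mem_filter, Finset.mem_univ, true_and]
    exact hcond
  have hcore := SteklovAux.core_V (r := r) htree hsub hz rfl hmin hball hdeg hd
    (t := t) hp0t (le_of_lt htr) (SteklovAux.extendH H u) hvanV
  have hbi := SteklovAux.bInner_transfer (H := H) u
  have hep := SteklovAux.energy_pairs htree hsub hz rfl hmin (t := t) hp0t (SteklovAux.extendH H u)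
  have het := SteklovAux.energy_transfer (H := H) u
  have hYnn : (0:ℝ) ≤ ∑ y ∈ Finset.univ.filter
      (fun y => y ∈ H.verts ∧ t < Gt.dist o y),
      (SteklovAux.extendH H u y - SteklovAux.extendH H u (SteklovAux.par Gt o y)) ^ 2 := by
    apply Finset.sum_nonneg
    intro y _
    positivity
  have hmono : ∑ i ∈ Finset.range (r - t), ((d:ℝ) - 1) ^ i ≤
      ∑ i ∈ Finset.range (r + 2 - k), ((d:ℝ) - 1) ^ i := by
    apply Finset.sum_le_sum_of_subset_of_nonneg
    · exact Finset.range_subset_range.mpr (by omega)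
    · intro i _ _
      exact pow_nonneg (by linarith) i
  have hSnn : (0:ℝ) ≤ ∑ i ∈ Finset.range (r + 2 - k), ((d:ℝ) - 1) ^ i := by linarith
  have hEY : ∑ y ∈ Finset.univ.filter
      (fun y => y ∈ H.verts ∧ t < Gt.dist o y),
      (SteklovAux.extendH H u y - SteklovAux.extendH H u (SteklovAux.par Gt o y)) ^ 2 ≤
      energy H.coe (fun _ _ => 1) u := by
    rw [het]
    exact hep
  have hchain : bInner (combBoundary H.coe) (fun _ => 1) u u ≤
      (∑ i ∈ Finset.range (r + 2 - k), ((d:ℝ) - 1) ^ i) *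
        energy H.coe (fun _ _ => 1) u := by
    rw [hbi]
    calc ∑ v ∈ Finset.univ.filter (fun v => SteklovAux.IsLeaf Gt H v), (SteklovAux.extendH H u v) ^ 2
        ≤ (∑ i ∈ Finset.range (r - t), ((d:ℝ) - 1) ^ i) *
          ∑ y ∈ Finset.univ.filter (fun y => y ∈ H.verts ∧ t < Gt.dist o y),
            (SteklovAux.extendH H u y - SteklovAux.extendH H u (SteklovAux.par Gt o y)) ^ 2 := hcore
      _ ≤ (∑ i ∈ Finset.range (r + 2 - k), ((d:ℝ) - 1) ^ i) *
          ∑ y ∈ Finset.univ.filter (fun y => y ∈ H.verts ∧ t < Gt.dist o y),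
            (SteklovAux.extendH H u y - SteklovAux.extendH H u (SteklovAux.par Gt o y)) ^ 2 :=
          mul_le_mul_of_nonneg_right hmono hYnn
      _ ≤ _ := mul_le_mul_of_nonneg_left hEY hSnn
  have hBpos : 0 < bInner (combBoundary H.coe) (fun _ => 1) u u := by
    have hBnn : 0 ≤ bInner (combBoundary H.coe) (fun _ => 1) u u := by
      rw [hbi]
      apply Finset.sum_nonneg
      intro v _
      positivity
    rcases eq_or_lt_of_le hBnn with h0 | h
    · exfalso
      apply hune
      apply hinjE u huE
      intro x hx
      rw [bInner] at h0
      have hterm := (Finset.sum_eq_zero_iff_of_nonneg (fun y _ => by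
        by_cases hy : y ∈ combBoundary H.coe
        · rw [if_pos hy]
          nlinarith [mul_self_nonneg (u y)]
        · rw [if_neg hy])).mp h0.symm x (Finset.mem_univ x)
      rw [if_pos hx, mul_one] at hterm
      exact mul_self_eq_zero.mp hterm
    · exact h
  have hσb := hbound u huE
  have h1S : 1 ≤ (∑ i ∈ Finset.range (r + 2 - k), ((d:ℝ) - 1) ^ i) * σ := by
    have h2 : bInner (combBoundary H.coe) (fun _ => 1) u u ≤
        (∑ i ∈ Finset.range (r + 2 - k), ((d:ℝ) - 1) ^ i) *
          (σ * bInner (combBoundary H.coe) (fun _ => 1) u u) :=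
      le_trans hchain (mul_le_mul_of_nonneg_left hσb hSnn)
    have h3 : 1 * bInner (combBoundary H.coe) (fun _ => 1) u u ≤
        ((∑ i ∈ Finset.range (r + 2 - k), ((d:ℝ) - 1) ^ i) * σ) *
          bInner (combBoundary H.coe) (fun _ => 1) u u := by
      calc 1 * bInner (combBoundary H.coe) (fun _ => 1) u u
          = bInner (combBoundary H.coe) (fun _ => 1) u u := one_mul _
        _ ≤ _ := h2
        _ = ((∑ i ∈ Finset.range (r + 2 - k), ((d:ℝ) - 1) ^ i) * σ) *
            bInner (combBoundary H.coe) (fun _ => 1) u u := by ring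
    exact le_of_mul_le_mul_right h3 hBpos
  calc ((d : ℝ) - 2) / (((d : ℝ) - 1) ^ (r + 2 - k) - 1)
      = ((d : ℝ) - 2) / (((d : ℝ) - 1) ^ (r + 2 - k) - 1) * 1 := by ring
    _ ≤ ((d : ℝ) - 2) / (((d : ℝ) - 1) ^ (r + 2 - k) - 1) *
        ((∑ i ∈ Finset.range (r + 2 - k), ((d:ℝ) - 1) ^ i) * σ) :=
        mul_le_mul_of_nonneg_left h1S hcnn
    _ = (((d : ℝ) - 2) / (((d : ℝ) - 1) ^ (r + 2 - k) - 1) *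
        ∑ i ∈ Finset.range (r + 2 - k), ((d:ℝ) - 1) ^ i) * σ := by ring
    _ = 1 * σ := by rw [hcS]
    _ = σ := one_mul σ
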